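/- arXiv:2107.14798 — 7 statements merged into one kernel-verified Lean document; each statement's English description precedes it below -/
import Mathlib

section
/- Let r ≥ 2. There exist real constants c > 0, C > 0 and a natural number n₀ such that for all n ≥ n₀: 2^{c·n^{r−1}·log₂ n} ≤ f(n, r, r+1, {2,3,…,r+1}) ≤ 2^{C·n^{r−1}·log₂ n}. -/
open Finset

/-- The family of all `r`-graphs on `[n]`: sets of `r`-element subsets of `Fin n`. -/
def rGraphs (n r : ℕ) : Finset (Finset (Finset (Fin n))) :=
  (Finset.univ.powersetCard r).powerset

/-- `G` is `(L,k)`-free: for every `k`-element vertex set `S`, the number of edges of `G`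
contained in `S` does not belong to `L`. -/
def IsLKFree (n k : ℕ) (L : Finset ℕ) (G : Finset (Finset (Fin n))) : Prop :=
  ∀ S : Finset (Fin n), S.card = k → (G.filter (fun e => e ⊆ S)).card ∉ L

instance (n k : ℕ) (L : Finset ℕ) : DecidablePred (IsLKFree n k L) := fun G =>
  inferInstanceAs (Decidable (∀ S : Finset (Fin n), S.card = k →
    (G.filter (fun e => e ⊆ S)).card ∉ L))

/-- `f(n,r,k,L)`: the number of `(L,k)`-free `r`-graphs on `[n]`. -/
def numFree (n r k : ℕ) (L : Finset ℕ) : ℕ :=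
  ((rGraphs n r).filter (IsLKFree n k L)).card


open scoped Classical in
lemma greedy_count {ι β : Type*} [Fintype ι] [DecidableEq ι] [Fintype β] [DecidableEq β]
    [LinearOrder β]
    (d₀ : β) (Y : Finset β) (R : ι → ι → Prop)
    (hsymm : ∀ x y, R x y → R y x)
    (D q : ℕ) (hq : D + q ≤ Y.card)
    (V : Finset ι)
    (hdeg : ∀ v ∈ V, ∃ N : Finset ι, (∀ u ∈ V, R v u → u ∈ N) ∧ N.card ≤ D) :
    ∃ F : Finset (ι → β),
      (∀ f ∈ F, (∀ x, x ∉ V → f x = d₀) ∧ (∀ x ∈ V, f x ∈ Y) ∧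
        (∀ x ∈ V, ∀ y ∈ V, R x y → x ≠ y → f x ≠ f y)) ∧
      q ^ V.card ≤ F.card := by
  refine ⟨Finset.univ.filter (fun f : ι → β =>
      (∀ x, x ∉ V → f x = d₀) ∧ (∀ x ∈ V, f x ∈ Y) ∧
      (∀ x ∈ V, ∀ y ∈ V, R x y → x ≠ y → f x ≠ f y)), ?_, ?_⟩
  · intro f hf
    exact (Finset.mem_filter.mp hf).2
  induction V using Finset.induction_on with
  | empty =>
    simp only [Finset.card_empty, pow_zero]
    refine Finset.card_pos.mpr ⟨fun _ => d₀, ?_⟩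
    simp
  | @insert a s ha ih =>
    have hdegs : ∀ v ∈ s, ∃ N : Finset ι, (∀ u ∈ s, R v u → u ∈ N) ∧ N.card ≤ D := by
      intro v hv
      obtain ⟨N, hN1, hN2⟩ := hdeg v (Finset.mem_insert_of_mem hv)
      exact ⟨N, fun u hu hR => hN1 u (Finset.mem_insert_of_mem hu) hR, hN2⟩
    have IH := ih hdegs
    obtain ⟨Na, hNa1, hNa2⟩ := hdeg a (Finset.mem_insert_self a s)
    have hsubNa : ∀ g : ι → β, (s.filter (fun u => R a u)).image g ⊆ Na.image g := by
      intro g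
      apply Finset.image_subset_image
      intro u hu
      rw [Finset.mem_filter] at hu
      exact hNa1 u (Finset.mem_insert_of_mem hu.1) hu.2
    have havail : ∀ g : ι → β, q ≤ (Y \ ((s.filter (fun u => R a u)).image g)).card := by
      intro g
      have h1 : ((s.filter (fun u => R a u)).image g).card ≤ D := by
        refine le_trans (Finset.card_le_card (hsubNa g)) (le_trans Finset.card_image_le hNa2)
      have h2 := Finset.le_card_sdiff ((s.filter (fun u => R a u)).image g) Y
      have h3 : q ≤ Y.card - D :=
        Nat.le_sub_of_add_le (by rwa [Nat.add_comm] at hq)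
      exact le_trans h3 (le_trans (Nat.sub_le_sub_left h1 Y.card) h2)
    have key : (((Finset.univ.filter (fun f : ι → β =>
          (∀ x, x ∉ s → f x = d₀) ∧ (∀ x ∈ s, f x ∈ Y) ∧
          (∀ x ∈ s, ∀ y ∈ s, R x y → x ≠ y → f x ≠ f y)))) ×ˢ Finset.range q).card ≤
        (Finset.univ.filter (fun f : ι → β =>
          (∀ x, x ∉ insert a s → f x = d₀) ∧ (∀ x ∈ insert a s, f x ∈ Y) ∧
          (∀ x ∈ insert a s, ∀ y ∈ insert a s, R x y → x ≠ y → f x ≠ f y))).card := by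
      apply Finset.card_le_card_of_injOn (fun p =>
        Function.update p.1 a
          (((Y \ ((s.filter (fun u => R a u)).image p.1)).sort (· ≤ ·)).getD p.2 d₀))
      · rintro ⟨g, i⟩ hp
        rw [Finset.mem_coe, Finset.mem_product, Finset.mem_range] at hp
        obtain ⟨hg, hi⟩ := hp
        dsimp only at hg hi
        rw [Finset.mem_filter] at hg
        obtain ⟨-, hg0, hg1, hg2⟩ := hg
        dsimp only
        set l := (Y \ ((s.filter (fun u => R a u)).image g)).sort (· ≤ ·) with hl
        have hlen : i < l.length := by
          rw [hl, Finset.length_sort]; exact lt_of_lt_of_le hi (havail g)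
        have hc : l.getD i d₀ ∈ Y \ ((s.filter (fun u => R a u)).image g) := by
          rw [List.getD_eq_getElem l d₀ hlen]
          rw [← Finset.mem_sort (α := β) (· ≤ ·)]
          exact List.getElem_mem _
        rw [Finset.mem_sdiff] at hc
        rw [Finset.mem_coe, Finset.mem_filter]
        refine ⟨Finset.mem_univ _, ?_, ?_, ?_⟩
        · intro x hx
          rw [Function.update_apply]
          rw [if_neg (by intro h; exact hx (h ▸ Finset.mem_insert_self a s))]
          exact hg0 x (fun hxs => hx (Finset.mem_insert_of_mem hxs))
        · intro x hx
          rw [Function.update_apply]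
          split
          · exact hc.1
          · rcases Finset.mem_insert.mp hx with h | h
            · exact absurd h (by assumption)
            · exact hg1 x h
        · intro x hx y hy hR hne
          have hupdmem : ∀ z, z ∈ s → Function.update g a (l.getD i d₀) z = g z := by
            intro z hz
            have hza : ¬ (z = a) := fun h => ha (h ▸ hz)
            rw [Function.update_apply, if_neg hza]
          rcases Finset.mem_insert.mp hx with hxa | hxs
          · rcases Finset.mem_insert.mp hy with hya | hys
            · exact absurd (hxa.trans hya.symm) hne
            · rw [hxa, Function.update_self, hupdmem y hys]
              intro hEq
              exact hc.2 (Finset.mem_image.mpr ⟨y, Finset.mem_filter.mpr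
                ⟨hys, hxa ▸ hR⟩, hEq.symm⟩)
          · rcases Finset.mem_insert.mp hy with hya | hys
            · rw [hya, Function.update_self, hupdmem x hxs]
              intro hEq
              exact hc.2 (Finset.mem_image.mpr
                ⟨x, Finset.mem_filter.mpr ⟨hxs, hsymm x a (hya ▸ hR)⟩, hEq⟩)
            · rw [hupdmem x hxs, hupdmem y hys]
              exact hg2 x hxs y hys hR hne
      · rintro ⟨g₁, i₁⟩ hp₁ ⟨g₂, i₂⟩ hp₂ hEq
        rw [Finset.mem_coe, Finset.mem_product, Finset.mem_range] at hp₁ hp₂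
        obtain ⟨hg₁, hi₁⟩ := hp₁
        obtain ⟨hg₂, hi₂⟩ := hp₂
        dsimp only at hg₁ hg₂ hi₁ hi₂
        rw [Finset.mem_filter] at hg₁ hg₂
        dsimp only at hEq
        have hgeq : g₁ = g₂ := by
          funext x
          by_cases hx : x = a
          · subst hx
            rw [hg₁.2.1 x ha, hg₂.2.1 x ha]
          · have := congrFun hEq x
            rwa [Function.update_apply, Function.update_apply, if_neg hx, if_neg hx] at this
        subst hgeq
        have hval := congrFun hEq a
        simp only [Function.update_self] at hval
        set l := (Y \ ((s.filter (fun u => R a u)).image g₁)).sort (· ≤ ·) with hl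
        have hlen₁ : i₁ < l.length := by
          rw [hl, Finset.length_sort]; exact lt_of_lt_of_le hi₁ (havail g₁)
        have hlen₂ : i₂ < l.length := by
          rw [hl, Finset.length_sort]; exact lt_of_lt_of_le hi₂ (havail g₁)
        have hnd : l.Nodup := Finset.sort_nodup _ _
        rw [List.getD_eq_getElem l d₀ hlen₁, List.getD_eq_getElem l d₀ hlen₂] at hval
        have : i₁ = i₂ := (hnd.getElem_inj_iff).mp hval
        simp [this]
    calc q ^ (insert a s).card = q ^ s.card * q := by
          rw [Finset.card_insert_of_notMem ha, pow_succ]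
      _ ≤ _ * q := Nat.mul_le_mul_right q IH
      _ = _ := by rw [Finset.card_product, Finset.card_range]
      _ ≤ _ := key

lemma lower_nat (r : ℕ) (hr : 2 ≤ r) (n : ℕ) (hn : 64 * r ^ 3 ≤ n) :
    (n / 4) ^ ((n / r ^ 2).choose (r - 1)) ≤ numFree n r (r + 1) (Finset.Icc 2 (r + 1)) := by
  classical
  have hrpos : 0 < r := by omega
  have hnpos : 0 < n := by nlinarith [pow_pos hrpos 3]
  obtain ⟨t, ht⟩ : ∃ t, t = n / r ^ 2 := ⟨_, rfl⟩
  rw [← ht]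
  have htn : t ≤ n := ht ▸ Nat.div_le_self _ _
  set X : Finset (Fin n) := Finset.univ.filter (fun v => (v : ℕ) < t) with hX
  set Y : Finset (Fin n) := Finset.univ.filter (fun v => t ≤ (v : ℕ)) with hY
  have hXY : ∀ v : Fin n, v ∈ X → v ∈ Y → False := by
    intro v hvX hvY
    rw [hX, Finset.mem_filter] at hvX
    rw [hY, Finset.mem_filter] at hvY
    omega
  have hXcard : X.card = t := by
    apply Finset.card_eq_of_bijective (fun i hi => ⟨i, lt_of_lt_of_le hi htn⟩)
    · intro a ha
      rw [hX, Finset.mem_filter] at ha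
      exact ⟨a.1, ha.2, Fin.ext rfl⟩
    · intro i hi
      rw [hX, Finset.mem_filter]
      exact ⟨Finset.mem_univ _, hi⟩
    · intro i j hi hj hij
      exact Fin.mk_eq_mk.mp hij
  have hYcard : Y.card = n - t := by
    have : Y = Finset.univ \ X := by
      rw [hX, hY, ← Finset.filter_not]
      simp only [not_lt]
    rw [this, Finset.card_sdiff_of_subset (Finset.subset_univ X), Finset.card_univ, Fintype.card_fin,
      hXcard]
  set 𝒜 : Finset (Finset (Fin n)) := X.powersetCard (r - 1) with h𝒜
  have h𝒜card : 𝒜.card = t.choose (r - 1) := by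
    rw [h𝒜, Finset.card_powersetCard, hXcard]
  have h𝒜mem : ∀ A ∈ 𝒜, A ⊆ X ∧ A.card = r - 1 := by
    intro A hA; rwa [h𝒜, Finset.mem_powersetCard] at hA
  set R : Finset (Fin n) → Finset (Fin n) → Prop := fun A B => (A ∩ B).card = r - 2 with hR
  have hsymm : ∀ A B, R A B → R B A := by
    intro A B h
    show (B ∩ A).card = r - 2
    rwa [Finset.inter_comm]
  obtain ⟨D, hD⟩ : ∃ D, D = (r - 1) * t := ⟨_, rfl⟩
  obtain ⟨q, hq4⟩ : ∃ q, q = n / 4 := ⟨_, rfl⟩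
  have hd₀ : (0 : ℕ) < n := hnpos
  set d₀ : Fin n := ⟨0, hnpos⟩ with hd₀'
  -- degree bound
  have hdeg : ∀ A ∈ 𝒜, ∃ N : Finset (Finset (Fin n)),
      (∀ B ∈ 𝒜, R A B → B ∈ N) ∧ N.card ≤ D := by
    intro A hA
    obtain ⟨hAX, hAcard⟩ := h𝒜mem A hA
    refine ⟨(𝒜.filter (fun B => R A B)), fun B hB hRB => Finset.mem_filter.mpr ⟨hB, hRB⟩, ?_⟩
    have : (𝒜.filter (fun B => R A B)).card ≤ (A ×ˢ X).card := by
      apply Finset.card_le_card_of_injOn (fun B =>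
        ((WithTop.untopD d₀ (A \ B).min), (WithTop.untopD d₀ (B \ A).min)))
      · intro B hB
        rw [Finset.mem_coe, Finset.mem_filter] at hB
        obtain ⟨hB𝒜, hRB⟩ := hB
        obtain ⟨hBX, hBcard⟩ := h𝒜mem B hB𝒜
        rw [hR] at hRB
        have hAB1 : (A \ B).card = 1 := by
          have := Finset.card_inter_add_card_sdiff A B
          omega
        have hBA1 : (B \ A).card = 1 := by
          have h1 := Finset.card_inter_add_card_sdiff B A
          rw [Finset.inter_comm] at h1
          omega
        obtain ⟨x, hx⟩ := Finset.card_eq_one.mp hAB1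
        obtain ⟨y, hy⟩ := Finset.card_eq_one.mp hBA1
        have hxA : x ∈ A := by
          have : x ∈ A \ B := hx.symm ▸ Finset.mem_singleton_self x
          exact (Finset.mem_sdiff.mp this).1
        have hyB : y ∈ B := by
          have : y ∈ B \ A := hy.symm ▸ Finset.mem_singleton_self y
          exact (Finset.mem_sdiff.mp this).1
        simp only [hx, hy, Finset.min_singleton, WithTop.untopD_coe, Finset.mem_coe, Finset.mem_product]
        exact ⟨hxA, hBX hyB⟩
      · intro B₁ hB₁ B₂ hB₂ hEq
        rw [Finset.mem_coe, Finset.mem_filter] at hB₁ hB₂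
        obtain ⟨hB₁𝒜, hRB₁⟩ := hB₁
        obtain ⟨hB₂𝒜, hRB₂⟩ := hB₂
        obtain ⟨hB₁X, hB₁card⟩ := h𝒜mem _ hB₁𝒜
        obtain ⟨hB₂X, hB₂card⟩ := h𝒜mem _ hB₂𝒜
        rw [hR] at hRB₁ hRB₂
        have key : ∀ B : Finset (Fin n), B ⊆ X → B.card = r - 1 → (A ∩ B).card = r - 2 →
            ∀ x y : Fin n, A \ B = {x} → B \ A = {y} → B = insert y (A.erase x) := by
          intro B hBX hBc hABc x y hx hy
          have h1 : A ∩ B = A.erase x := by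
            rw [← Finset.sdiff_sdiff_self_left A B, hx, Finset.sdiff_singleton_eq_erase]
          have h2 : B \ A ∪ B ∩ A = B := Finset.sdiff_union_inter B A
          rw [← h2, hy, Finset.inter_comm, h1]
          rw [← Finset.insert_eq]
        have hAB1 : (A \ B₁).card = 1 := by
          have := Finset.card_inter_add_card_sdiff A B₁; omega
        have hBA1 : (B₁ \ A).card = 1 := by
          have h1 := Finset.card_inter_add_card_sdiff B₁ A
          rw [Finset.inter_comm] at h1; omega
        have hAB2 : (A \ B₂).card = 1 := by
          have := Finset.card_inter_add_card_sdiff A B₂; omega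
        have hBA2 : (B₂ \ A).card = 1 := by
          have h1 := Finset.card_inter_add_card_sdiff B₂ A
          rw [Finset.inter_comm] at h1; omega
        obtain ⟨x₁, hx₁⟩ := Finset.card_eq_one.mp hAB1
        obtain ⟨y₁, hy₁⟩ := Finset.card_eq_one.mp hBA1
        obtain ⟨x₂, hx₂⟩ := Finset.card_eq_one.mp hAB2
        obtain ⟨y₂, hy₂⟩ := Finset.card_eq_one.mp hBA2
        simp only [hx₁, hy₁, hx₂, hy₂, Finset.min_singleton, WithTop.untopD_coe,
          Prod.mk.injEq] at hEq
        rw [key B₁ hB₁X hB₁card hRB₁ x₁ y₁ hx₁ hy₁,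
            key B₂ hB₂X hB₂card hRB₂ x₂ y₂ hx₂ hy₂, hEq.1, hEq.2]
    calc (𝒜.filter (fun B => R A B)).card ≤ (A ×ˢ X).card := this
      _ = (r - 1) * t := by rw [Finset.card_product, hAcard, hXcard]
      _ = D := hD.symm
  -- cardinality inequality for the color budget
  have hbudget : D + q ≤ Y.card := by
    have h1 : t * r ≤ n / r := by
      have : t = n / r / r := by rw [ht, Nat.div_div_eq_div_mul, sq]
      rw [this]
      exact Nat.div_mul_le_self (n / r) r
    have h2 : n / r ≤ n / 2 := Nat.div_le_div_left hr (by norm_num)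
    have h3 : D + t = t * r := by
      rw [hD, Nat.sub_one_mul, mul_comm t r]
      have h0 : t ≤ r * t := Nat.le_mul_of_pos_left t hrpos
      omega
    rw [hYcard]
    omega
  -- apply the greedy bound
  obtain ⟨F, hFmem, hFcard⟩ := greedy_count d₀ Y R hsymm D q hbudget 𝒜 hdeg
  rw [h𝒜card] at hFcard
  rw [hq4] at hFcard
  refine le_trans hFcard ?_
  -- now inject colorings into free graphs
  unfold numFree
  apply Finset.card_le_card_of_injOn (fun f => 𝒜.image (fun A => insert (f A) A))
  · intro f hf
    obtain ⟨hf0, hf1, hf2⟩ := hFmem f (by exact_mod_cast hf)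
    have hedge : ∀ A ∈ 𝒜, (insert (f A) A).card = r ∧ f A ∉ A := by
      intro A hA
      obtain ⟨hAX, hAcard⟩ := h𝒜mem A hA
      have hfA : f A ∉ A := fun h => hXY _ (hAX h) (hf1 A hA)
      rw [Finset.card_insert_of_notMem hfA, hAcard]
      exact ⟨by omega, hfA⟩
    rw [Finset.mem_coe, Finset.mem_filter]
    refine ⟨?_, ?_⟩
    · rw [rGraphs, Finset.mem_powerset]
      intro e he
      rw [Finset.mem_image] at he
      obtain ⟨A, hA, rfl⟩ := he
      rw [Finset.mem_powersetCard]
      exact ⟨Finset.subset_univ _, (hedge A hA).1⟩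
    · intro S hS
      rw [Finset.mem_Icc]
      push_neg
      intro habs
      exfalso
      have hcard1 : ((𝒜.image (fun A => insert (f A) A)).filter (fun e => e ⊆ S)).card ≤ 1 := by
        rw [Finset.card_le_one]
        intro e₁ he₁ e₂ he₂
        rw [Finset.mem_filter, Finset.mem_image] at he₁ he₂
        obtain ⟨⟨A₁, hA₁, rfl⟩, hS₁⟩ := he₁
        obtain ⟨⟨A₂, hA₂, rfl⟩, hS₂⟩ := he₂
        obtain ⟨hA₁X, hA₁c⟩ := h𝒜mem A₁ hA₁
        obtain ⟨hA₂X, hA₂c⟩ := h𝒜mem A₂ hA₂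
        have hu₁ := hf1 A₁ hA₁
        have hu₂ := hf1 A₂ hA₂
        -- show A₁ = A₂
        suffices hAA : A₁ = A₂ by rw [hAA]
        by_contra hne
        set e₁ := insert (f A₁) A₁ with he₁d
        set e₂ := insert (f A₂) A₂ with he₂d
        have hc₁ : e₁.card = r := ((hedge A₁ hA₁)).1
        have hc₂ : e₂.card = r := ((hedge A₂ hA₂)).1
        have hcup : (e₁ ∪ e₂).card ≤ r + 1 := by
          rw [← hS]
          exact Finset.card_le_card (Finset.union_subset hS₁ hS₂)
        have hsum := Finset.card_union_add_card_inter e₁ e₂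
        have hcap : r - 1 ≤ (e₁ ∩ e₂).card := by omega
        have hsub : e₁ ∩ e₂ ⊆ insert (f A₁) (A₁ ∩ A₂) := by
          intro w hw
          rw [Finset.mem_inter] at hw
          obtain ⟨hw₁, hw₂⟩ := hw
          rw [he₁d, Finset.mem_insert] at hw₁
          rw [he₂d, Finset.mem_insert] at hw₂
          rcases hw₁ with h | h
          · rw [h]; exact Finset.mem_insert_self _ _
          · rcases hw₂ with h' | h'
            · exfalso; exact hXY w (hA₁X h) (h' ▸ hu₂)
            · exact Finset.mem_insert_of_mem (Finset.mem_inter.mpr ⟨h, h'⟩)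
        have hAcapne : (A₁ ∩ A₂).card ≠ r - 1 := by
          intro h
          have hsub₁ : A₁ ∩ A₂ ⊆ A₁ := Finset.inter_subset_left
          have : A₁ ∩ A₂ = A₁ := Finset.eq_of_subset_of_card_le hsub₁ (by omega)
          have hsub₂ : A₁ ⊆ A₂ := by rw [← this]; exact Finset.inter_subset_right
          exact hne (Finset.eq_of_subset_of_card_le hsub₂ (by omega))
        have hAcaple : (A₁ ∩ A₂).card ≤ r - 1 := by
          rw [← hA₁c]
          exact Finset.card_le_card Finset.inter_subset_left
        have hcapins : (e₁ ∩ e₂).card ≤ (A₁ ∩ A₂).card + 1 := by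
          refine le_trans (Finset.card_le_card hsub) ?_
          exact Finset.card_insert_le _ _
        have hAcap : (A₁ ∩ A₂).card = r - 2 := by omega
        -- now f A₁ = f A₂
        have hfmem : f A₁ ∈ e₁ ∩ e₂ := by
          by_contra hfnm
          have : e₁ ∩ e₂ ⊆ A₁ ∩ A₂ := by
            intro w hw
            have := hsub hw
            rw [Finset.mem_insert] at this
            rcases this with h | h
            · exact absurd (h ▸ hw) hfnm
            · exact h
          have := Finset.card_le_card this
          omega
        have hfeq : f A₁ = f A₂ := by
          have h2 := (Finset.mem_inter.mp hfmem).2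
          rw [he₂d, Finset.mem_insert] at h2
          rcases h2 with h | h
          · exact h
          · exact absurd (hXY _ (hA₂X h) hu₁) not_false
        exact hf2 A₁ hA₁ A₂ hA₂ (by rw [hR]; exact hAcap) hne hfeq
      omega
  · intro f hf g hg hEq
    dsimp only at hEq
    obtain ⟨hf0, hf1, -⟩ := hFmem f (by exact_mod_cast hf)
    obtain ⟨hg0, hg1, -⟩ := hFmem g (by exact_mod_cast hg)
    funext A
    by_cases hA : A ∈ 𝒜
    · obtain ⟨hAX, hAcard⟩ := h𝒜mem A hA
      have hfA : f A ∉ A := fun h => hXY _ (hAX h) (hf1 A hA)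
      have hmem : insert (f A) A ∈ 𝒜.image (fun B => insert (g B) B) := by
        rw [← hEq]
        exact Finset.mem_image_of_mem _ hA
      rw [Finset.mem_image] at hmem
      obtain ⟨B, hB, hBe⟩ := hmem
      obtain ⟨hBX, hBcard⟩ := h𝒜mem B hB
      have hgB : g B ∉ B := fun h => hXY _ (hBX h) (hg1 B hB)
      have hfilt : ∀ (C : Finset (Fin n)) (u : Fin n), C ⊆ X → u ∈ Y →
          (insert u C).filter (fun v => v ∈ X) = C := by
        intro C u hCX hu
        rw [Finset.filter_insert, if_neg (fun h => hXY u h hu)]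
        exact Finset.filter_true_of_mem (fun v hv => hCX hv)
      have hAB : B = A := by
        have h1 := hfilt A (f A) hAX (hf1 A hA)
        have h2 := hfilt B (g B) hBX (hg1 B hB)
        rw [← h1, ← h2, hBe]
      subst hAB
      have : f B ∈ insert (g B) B := by rw [hBe]; exact Finset.mem_insert_self _ _
      rw [Finset.mem_insert] at this
      rcases this with h | h
      · exact h
      · exact absurd h hfA
    · rw [hf0 A hA, hg0 A hA]

lemma upper_nat (r : ℕ) (hr : 2 ≤ r) (n : ℕ) (hn : r + 1 ≤ n) :
    numFree n r (r + 1) (Finset.Icc 2 (r + 1)) ≤ n ^ (2 * r * n ^ (r - 1)) := by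
  classical
  have hn2 : 2 ≤ n := by omega
  have hnpos : 0 < n := by omega
  set d₀ : Fin n := ⟨0, hnpos⟩ with hd₀
  obtain ⟨K, hK⟩ : ∃ K, K = n.choose (r - 1) := ⟨_, rfl⟩
  obtain ⟨E, hE⟩ : ∃ E, E = n.choose r := ⟨_, rfl⟩
  -- step 1 : every free graph has at most K edges
  have hsmall : ∀ G ∈ (rGraphs n r).filter (IsLKFree n (r + 1) (Finset.Icc 2 (r + 1))),
      G.card ≤ K := by
    intro G hG
    rw [Finset.mem_filter] at hG
    obtain ⟨hGr, hGfree⟩ := hG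
    rw [rGraphs, Finset.mem_powerset] at hGr
    have hGcard : ∀ e ∈ G, e.card = r := by
      intro e he
      exact (Finset.mem_powersetCard.mp (hGr he)).2
    have : G.card ≤ (Finset.univ.powersetCard (r - 1) : Finset (Finset (Fin n))).card := by
      apply Finset.card_le_card_of_injOn (fun e => e.erase (WithTop.untopD d₀ (e.min)))
      · intro e he
        have hec := hGcard e he
        have hne : e.Nonempty := by
          rw [← Finset.card_pos, hec]; omega
        have hmin : WithTop.untopD d₀ (e.min) = e.min' hne := by
          rw [← Finset.coe_min', WithTop.untopD_coe]
        rw [Finset.mem_coe, Finset.mem_powersetCard]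
        refine ⟨Finset.subset_univ _, ?_⟩
        dsimp only
        rw [hmin, Finset.card_erase_of_mem (Finset.min'_mem e hne), hec]
      · intro e₁ he₁ e₂ he₂ hEq
        rw [Finset.mem_coe] at he₁ he₂
        dsimp only at hEq
        by_contra hne
        have hc₁ := hGcard e₁ he₁
        have hc₂ := hGcard e₂ he₂
        have hne₁ : e₁.Nonempty := by rw [← Finset.card_pos, hc₁]; omega
        have hsub : e₁.erase (WithTop.untopD d₀ (e₁.min)) ⊆ e₁ ∩ e₂ := by
          intro w hw
          rw [Finset.mem_inter]
          constructor
          · exact Finset.erase_subset _ _ hw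
          · rw [hEq] at hw
            exact Finset.erase_subset _ _ hw
        have hminmem : WithTop.untopD d₀ (e₁.min) ∈ e₁ := by
          have : WithTop.untopD d₀ (e₁.min) = e₁.min' hne₁ := by
            rw [← Finset.coe_min', WithTop.untopD_coe]
          rw [this]; exact Finset.min'_mem e₁ hne₁
        have hcap_ge : r - 1 ≤ (e₁ ∩ e₂).card := by
          have h1 := Finset.card_le_card hsub
          rw [Finset.card_erase_of_mem hminmem, hc₁] at h1
          exact h1
        have hcap_ne : (e₁ ∩ e₂).card ≠ r := by
          intro h
          have hsub₁ : e₁ ∩ e₂ ⊆ e₁ := Finset.inter_subset_left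
          have heq₁ : e₁ ∩ e₂ = e₁ := Finset.eq_of_subset_of_card_le hsub₁ (by omega)
          have hsub₂ : e₁ ⊆ e₂ := by rw [← heq₁]; exact Finset.inter_subset_right
          exact hne (Finset.eq_of_subset_of_card_le hsub₂ (by omega))
        have hcap_le : (e₁ ∩ e₂).card ≤ r := by
          rw [← hc₁]; exact Finset.card_le_card Finset.inter_subset_left
        have hcap : (e₁ ∩ e₂).card = r - 1 := by omega
        have hunion : (e₁ ∪ e₂).card = r + 1 := by
          have := Finset.card_union_add_card_inter e₁ e₂
          omega
        have := hGfree (e₁ ∪ e₂) hunion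
        rw [Finset.mem_Icc] at this
        push_neg at this
        have h2le : 1 < (G.filter (fun e => e ⊆ e₁ ∪ e₂)).card := by
          refine Finset.one_lt_card.mpr ⟨e₁, ?_, e₂, ?_, hne⟩
          · rw [Finset.mem_filter];
            exact ⟨he₁, Finset.subset_union_left⟩
          · rw [Finset.mem_filter];
            exact ⟨he₂, Finset.subset_union_right⟩
        have hle : (G.filter (fun e => e ⊆ e₁ ∪ e₂)).card ≤ r + 1 := by
          have hsubset : G.filter (fun e => e ⊆ e₁ ∪ e₂) ⊆ (e₁ ∪ e₂).powersetCard r := by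
            intro e he
            rw [Finset.mem_filter] at he
            rw [Finset.mem_powersetCard]
            exact ⟨he.2, hGcard e he.1⟩
          have := Finset.card_le_card hsubset
          rwa [Finset.card_powersetCard, hunion, Nat.choose_succ_self_right] at this
        omega
    rwa [Finset.card_powersetCard, Finset.card_univ, Fintype.card_fin, ← hK] at this
  -- step 2 : count graphs with at most K edges
  have hcount : numFree n r (r + 1) (Finset.Icc 2 (r + 1)) ≤ (K + 1) * E ^ K := by
    unfold numFree
    have hsub : (rGraphs n r).filter (IsLKFree n (r + 1) (Finset.Icc 2 (r + 1))) ⊆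
        (Finset.range (K + 1)).biUnion
          (fun m => (Finset.univ.powersetCard r : Finset (Finset (Fin n))).powersetCard m) := by
      intro G hG
      rw [Finset.mem_biUnion]
      refine ⟨G.card, Finset.mem_range.mpr (by have := hsmall G hG; omega), ?_⟩
      rw [Finset.mem_powersetCard]
      have := Finset.mem_filter.mp hG
      rw [rGraphs, Finset.mem_powerset] at this
      exact ⟨this.1, rfl⟩
    refine le_trans (Finset.card_le_card hsub) ?_
    refine le_trans (Finset.card_biUnion_le) ?_
    have hEpos : 1 ≤ E := by
      rw [hE]; exact Nat.choose_pos (by omega)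
    have : ∀ m ∈ Finset.range (K + 1),
        ((Finset.univ.powersetCard r : Finset (Finset (Fin n))).powersetCard m).card ≤ E ^ K := by
      intro m hm
      rw [Finset.card_powersetCard, Finset.card_powersetCard, Finset.card_univ,
        Fintype.card_fin, ← hE]
      refine le_trans (Nat.choose_le_pow _ _) ?_
      exact Nat.pow_le_pow_right hEpos (by rw [Finset.mem_range] at hm; omega)
    refine le_trans (Finset.sum_le_sum this) ?_
    rw [Finset.sum_const, Finset.card_range, smul_eq_mul]
  -- step 3 : numeric bound
  refine le_trans hcount ?_
  have h1 : K + 1 ≤ n ^ r := by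
    have : K ≤ n ^ (r - 1) := hK ▸ Nat.choose_le_pow n (r - 1)
    have h2 : n ^ (r - 1) + 1 ≤ n ^ r := by
      have : n ^ r = n ^ (r - 1) * n := by
        rw [← pow_succ]; congr 1; omega
      have h3 : n ^ (r - 1) * 2 ≤ n ^ (r - 1) * n := Nat.mul_le_mul_left _ hn2
      have h4 : 1 ≤ n ^ (r - 1) := Nat.one_le_pow _ _ hnpos
      omega
    omega
  have h2 : E ^ K ≤ (n ^ r) ^ (n ^ (r - 1)) := by
    refine le_trans (Nat.pow_le_pow_left (hE ▸ Nat.choose_le_pow n r) K) ?_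
    exact Nat.pow_le_pow_right (Nat.one_le_pow _ _ hnpos) (hK ▸ Nat.choose_le_pow n (r - 1))
  calc (K + 1) * E ^ K ≤ n ^ r * (n ^ r) ^ (n ^ (r - 1)) := Nat.mul_le_mul h1 h2
    _ = n ^ (r + r * n ^ (r - 1)) := by rw [← pow_mul, ← pow_add]
    _ ≤ n ^ (2 * r * n ^ (r - 1)) := by
        apply Nat.pow_le_pow_right hnpos
        have h5 : r * 1 ≤ r * n ^ (r - 1) :=
          Nat.mul_le_mul_left r (Nat.one_le_pow _ _ hnpos)
        have h6 : 2 * r * n ^ (r - 1) = r * n ^ (r - 1) + r * n ^ (r - 1) := by ring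
        omega

/-- Lemma: for `r ≥ 2`, `f(n, r, r+1, {2,3,…,r+1}) = 2^(Θ(n^(r-1) log₂ n))`. -/
theorem count_list_2_to_rplus1 (r : ℕ) (hr : 2 ≤ r) :
    ∃ c C : ℝ, 0 < c ∧ 0 < C ∧ ∃ n₀ : ℕ, ∀ n : ℕ, n₀ ≤ n →
      (2 : ℝ) ^ (c * (n : ℝ) ^ (r - 1) * Real.logb 2 n) ≤
          (numFree n r (r + 1) (Finset.Icc 2 (r + 1)) : ℝ) ∧
      (numFree n r (r + 1) (Finset.Icc 2 (r + 1)) : ℝ) ≤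
          (2 : ℝ) ^ (C * (n : ℝ) ^ (r - 1) * Real.logb 2 n) := by
  have hrR : (0 : ℝ) < (r : ℝ) := by exact_mod_cast (by omega : 0 < r)
  have hKpos : (0 : ℝ) < (4 * (r : ℝ) ^ 2) ^ (r - 1) * (Nat.factorial (r - 1) : ℝ) := by
    apply mul_pos
    · exact pow_pos (by nlinarith) _
    · exact_mod_cast Nat.factorial_pos (r - 1)
  refine ⟨1 / ((4 * (r : ℝ) ^ 2) ^ (r - 1) * (Nat.factorial (r - 1) : ℝ) * 2), 2 * r, ?_, by positivity,
    64 * r ^ 3, ?_⟩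
  · apply div_pos one_pos
    nlinarith
  intro n hn
  have h8r3 : 8 ≤ r ^ 3 := by
    calc 8 = 2 ^ 3 := by norm_num
      _ ≤ r ^ 3 := Nat.pow_le_pow_left hr 3
  have hrr3 : r ≤ r ^ 3 := Nat.le_self_pow (by norm_num) r
  have hn512 : 512 ≤ n := by omega
  have hnpos : 0 < n := by omega
  have hnR : (0 : ℝ) < (n : ℝ) := by exact_mod_cast hnpos
  have hnR512 : (512 : ℝ) ≤ (n : ℝ) := by exact_mod_cast hn512
  have h2pos : (0 : ℝ) < 2 := by norm_num
  set L := Real.logb 2 (n : ℝ) with hL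
  have hL6 : 6 ≤ L := by
    rw [hL, Real.le_logb_iff_rpow_le (by norm_num) hnR]
    calc (2 : ℝ) ^ (6 : ℝ) = 64 := by
          rw [show (6:ℝ) = ((6:ℕ):ℝ) by norm_num, Real.rpow_natCast]; norm_num
      _ ≤ (n : ℝ) := by linarith
  constructor
  · -- lower bound
    obtain ⟨Q, hQ⟩ : ∃ Q, Q = n / 4 := ⟨_, rfl⟩
    obtain ⟨N, hN⟩ : ∃ N, N = (n / r ^ 2).choose (r - 1) := ⟨_, rfl⟩
    have hmain := lower_nat r hr n (by omega)
    rw [← hQ, ← hN] at hmain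
    -- (Q:ℝ)^N = 2 ^ (N * logb 2 Q)
    have hQ128 : 128 ≤ Q := by omega
    have hQR : (0 : ℝ) < (Q : ℝ) := by exact_mod_cast (by omega : 0 < Q)
    have hQrw : ((Q : ℝ)) ^ N = (2 : ℝ) ^ ((N : ℝ) * Real.logb 2 Q) := by
      rw [mul_comm, Real.rpow_mul (by norm_num), Real.rpow_logb h2pos (by norm_num) hQR,
        Real.rpow_natCast]
    have hmainR : ((Q : ℝ)) ^ N ≤ (numFree n r (r + 1) (Finset.Icc 2 (r + 1)) : ℝ) := by
      exact_mod_cast hmain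
    refine le_trans ?_ hmainR
    rw [hQrw]
    apply Real.rpow_le_rpow_of_exponent_le (by norm_num)
    -- exponent inequality
    have hlogQ : L / 2 ≤ Real.logb 2 Q := by
      have h8 : (n : ℝ) ≤ 8 * Q := by exact_mod_cast (by omega : n ≤ 8 * Q)
      have hstep : Real.logb 2 ((n : ℝ) / 8) ≤ Real.logb 2 Q := by
        apply Real.logb_le_logb_of_le (by norm_num) (by positivity)
        linarith
      have hdiv : Real.logb 2 ((n : ℝ) / 8) = L - 3 := by
        rw [Real.logb_div (by positivity) (by norm_num), hL]
        have h83 : Real.logb 2 8 = 3 := by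
          rw [show (8:ℝ) = 2 ^ (3:ℕ) by norm_num, Real.logb_pow,
            Real.logb_self_eq_one (by norm_num)]
          norm_num
        rw [h83]
      rw [hdiv] at hstep
      linarith
    have hNlow : (n : ℝ) ^ (r - 1) / ((4 * (r : ℝ) ^ 2) ^ (r - 1) * (Nat.factorial (r - 1) : ℝ)) ≤ (N : ℝ) := by
      obtain ⟨t, ht⟩ : ∃ t, t = n / r ^ 2 := ⟨_, rfl⟩
      obtain ⟨m, hm⟩ : ∃ m, m = t + 1 - (r - 1) := ⟨_, rfl⟩
      rw [← ht] at hN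
      have hchoose : ((m : ℝ)) ^ (r - 1) / (Nat.factorial (r - 1) : ℝ) ≤ (N : ℝ) := by
        rw [hN, hm]
        have := Nat.pow_le_choose (α := ℝ) (r - 1) t
        exact_mod_cast this
      have hmlow : (n : ℝ) / (4 * (r : ℝ) ^ 2) ≤ (m : ℝ) := by
        -- n ≤ 4 * (r^2 * m) in ℕ
        have hNat : n ≤ 4 * (r ^ 2 * m) := by
          have hdm := Nat.div_add_mod n (r ^ 2)
          rw [← ht] at hdm
          have hmod : n % r ^ 2 < r ^ 2 := Nat.mod_lt _ (by positivity)
          have htr : r ≤ t := by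
            rw [ht]
            calc r = 64 * r ^ 3 / (64 * r ^ 2) := by
                  rw [show 64 * r ^ 3 = r * (64 * r ^ 2) by ring]
                  rw [Nat.mul_div_cancel _ (by positivity)]
              _ ≤ n / (64 * r ^ 2) := Nat.div_le_div_right hn
              _ ≤ n / r ^ 2 := Nat.div_le_div_left (by omega) (by positivity)
          obtain ⟨p, hp⟩ : ∃ p, t = p + r := ⟨t - r, by omega⟩
          have hE : r ^ 2 * t = r ^ 2 * p + r ^ 3 := by rw [hp]; ring
          have hw : r ^ 2 * p ≤ r ^ 2 * m := Nat.mul_le_mul_left _ (by omega)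
          have hr23 : r ^ 2 ≤ r ^ 3 := Nat.pow_le_pow_right (by omega) (by omega)
          have h64 : 64 * r ^ 3 ≤ n := hn
          omega
        have : (n : ℝ) ≤ 4 * ((r : ℝ) ^ 2 * (m : ℝ)) := by exact_mod_cast hNat
        rw [div_le_iff₀ (by nlinarith)]
        nlinarith
      refine le_trans ?_ hchoose
      have hfact : (0 : ℝ) < (Nat.factorial (r - 1) : ℝ) := by
        exact_mod_cast Nat.factorial_pos (r - 1)
      have hb : (0:ℝ) < (4 * (r : ℝ) ^ 2) ^ (r - 1) := pow_pos (by nlinarith) _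
      have heq : (n : ℝ) ^ (r - 1) / ((4 * (r : ℝ) ^ 2) ^ (r - 1) * (Nat.factorial (r - 1) : ℝ))
          = ((n : ℝ) / (4 * (r : ℝ) ^ 2)) ^ (r - 1) / (Nat.factorial (r - 1) : ℝ) := by
        rw [div_pow]; ring
      rw [heq]
      have hpow : ((n : ℝ) / (4 * (r : ℝ) ^ 2)) ^ (r - 1) ≤ (m : ℝ) ^ (r - 1) :=
        pow_le_pow_left₀ (by positivity) hmlow _
      exact (div_le_div_iff_of_pos_right hfact).mpr hpow
    -- combine
    have hc₁pos : (0:ℝ) < 1 / ((4 * (r : ℝ) ^ 2) ^ (r - 1) * (Nat.factorial (r - 1) : ℝ)) := by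
      apply div_pos one_pos hKpos
    calc 1 / ((4 * (r : ℝ) ^ 2) ^ (r - 1) * (Nat.factorial (r - 1) : ℝ) * 2) * (n : ℝ) ^ (r - 1) * L
        = ((n : ℝ) ^ (r - 1) / ((4 * (r : ℝ) ^ 2) ^ (r - 1) * (Nat.factorial (r - 1) : ℝ))) * (L / 2) := by
          ring
      _ ≤ (N : ℝ) * Real.logb 2 Q := by
          apply mul_le_mul hNlow hlogQ (by linarith) (by positivity)
  · -- upper bound
    have hmain := upper_nat r hr n (by omega)
    have hcast : (numFree n r (r + 1) (Finset.Icc 2 (r + 1)) : ℝ) ≤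
        ((n : ℝ)) ^ (2 * r * n ^ (r - 1)) := by exact_mod_cast hmain
    refine le_trans hcast ?_
    have hrw : ((n : ℝ)) ^ (2 * r * n ^ (r - 1)) =
        (2 : ℝ) ^ (((2 * r * n ^ (r - 1) : ℕ) : ℝ) * L) := by
      rw [mul_comm ((2 * r * n ^ (r - 1) : ℕ) : ℝ) L, Real.rpow_mul (by norm_num), hL,
        Real.rpow_logb h2pos (by norm_num) hnR, Real.rpow_natCast]
    rw [hrw]
    apply Real.rpow_le_rpow_of_exponent_le (by norm_num)
    have hcast2 : ((2 * r * n ^ (r - 1) : ℕ) : ℝ) = 2 * (r:ℝ) * (n:ℝ) ^ (r - 1) := by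
      push_cast; ring
    rw [hcast2]
end

section
/- Let r ≥ 2. There exists a natural number n₀ such that for all n ≥ n₀, the number of r-graphs on [n] in which every (r−1)-element subset of [n] is contained in at most one edge is at least n^{n^{r−1}/(2·r^{r+1})}. -/
open Finset

/-- `M(n,r)`: the `r`-graphs on `[n]` in which every `(r-1)`-element subset of
the vertex set is contained in at most one edge. -/
def Mset (n r : ℕ) : Finset (Finset (Finset (Fin n))) :=
  (rGraphs n r).filter
    (fun G => ∀ A : Finset (Fin n), A.card = r - 1 → (G.filter (fun e => A ⊆ e)).card ≤ 1)

namespace MsetAux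

/-- All `r`-element edges on `Fin n`. -/
def E (n r : ℕ) : Finset (Finset (Fin n)) := Finset.univ.powersetCard r

lemma card_E (n r : ℕ) : (E n r).card = n.choose r := by
  simp [E, Finset.card_powersetCard]

lemma card_of_mem_E {n r : ℕ} {e : Finset (Fin n)} (he : e ∈ E n r) : e.card = r :=
  (Finset.mem_powersetCard.mp he).2

/-- Valid sequences of edges: all edges are `r`-sets, and any two distinct ones
meet in fewer than `r-1` vertices. -/
def P (n r m : ℕ) (s : Fin m → Finset (Fin n)) : Prop :=
  (∀ i, s i ∈ E n r) ∧ ∀ i j : Fin m, i ≠ j → (s i ∩ s j).card < r - 1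

instance (n r m : ℕ) : DecidablePred (P n r m) := fun s =>
  inferInstanceAs (Decidable ((∀ i, s i ∈ E n r) ∧
    ∀ i j : Fin m, i ≠ j → (s i ∩ s j).card < r - 1))

def T (n r m : ℕ) : Finset (Fin m → Finset (Fin n)) := Finset.univ.filter (P n r m)

lemma mem_T {n r m : ℕ} {s : Fin m → Finset (Fin n)} : s ∈ T n r m ↔ P n r m s := by
  simp [T]

/-- Each fixed edge `f` is "conflicting" with at most `r*n` edges. -/
lemma bad_card {n r : ℕ} (hr : 1 ≤ r) {f : Finset (Fin n)} (hf : f.card = r) :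
    ((E n r).filter fun e => r - 1 ≤ (e ∩ f).card).card ≤ r * n := by
  classical
  have hsub : ((E n r).filter fun e => r - 1 ≤ (e ∩ f).card) ⊆
      ((f.powersetCard (r - 1)) ×ˢ (Finset.univ : Finset (Fin n))).image
        (fun p => insert p.2 p.1) := by
    intro e he
    rw [Finset.mem_filter] at he
    obtain ⟨heE, hint⟩ := he
    have hecard : e.card = r := card_of_mem_E heE
    obtain ⟨A, hAsub, hAcard⟩ := Finset.exists_subset_card_eq hint
    have hAe : A ⊆ e := hAsub.trans Finset.inter_subset_left
    have hAf : A ⊆ f := hAsub.trans Finset.inter_subset_right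
    have hne : (e \ A).Nonempty := by
      rw [← Finset.card_pos, Finset.card_sdiff_of_subset hAe, hecard, hAcard]
      omega
    obtain ⟨x, hx⟩ := hne
    rw [Finset.mem_sdiff] at hx
    have heq : insert x A = e := by
      apply Finset.eq_of_subset_of_card_le
      · exact Finset.insert_subset hx.1 hAe
      · rw [Finset.card_insert_of_notMem hx.2, hAcard, hecard]
        omega
    refine Finset.mem_image.mpr ⟨(A, x), ?_, heq⟩
    rw [Finset.mem_product, Finset.mem_powersetCard]
    exact ⟨⟨hAf, hAcard⟩, Finset.mem_univ x⟩
  calc ((E n r).filter fun e => r - 1 ≤ (e ∩ f).card).card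
      ≤ (((f.powersetCard (r - 1)) ×ˢ (Finset.univ : Finset (Fin n))).image
          (fun p => insert p.2 p.1)).card := Finset.card_le_card hsub
    _ ≤ ((f.powersetCard (r - 1)) ×ˢ (Finset.univ : Finset (Fin n))).card :=
        Finset.card_image_le
    _ = r.choose (r - 1) * n := by
        rw [Finset.card_product, Finset.card_powersetCard, hf, Finset.card_univ,
          Fintype.card_fin]
    _ ≤ r * n := by
        have h1 : r.choose (r - 1) = r := by
          have := Nat.choose_symm (Nat.sub_le r 1)
          rw [Nat.sub_sub_self hr] at this
          rw [← this, Nat.choose_one_right]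
        rw [h1]

/-- Lower bound on the number of edges extending a valid sequence. -/
lemma good_card {n r m : ℕ} (hr : 1 ≤ r) {s : Fin m → Finset (Fin n)}
    (hs : ∀ i, s i ∈ E n r) :
    n.choose r - m * (r * n) ≤
      ((E n r).filter fun e => ∀ i, (e ∩ s i).card < r - 1).card := by
  classical
  set bad : Finset (Finset (Fin n)) :=
    (E n r).filter (fun e => ∃ i, r - 1 ≤ (e ∩ s i).card) with hbad
  have h1 : (E n r).filter (fun e => ∀ i, (e ∩ s i).card < r - 1) = E n r \ bad := by
    ext e
    simp only [hbad, Finset.mem_filter, Finset.mem_sdiff, not_and, not_exists, not_le]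
    tauto
  have hbadsub : bad ⊆ Finset.univ.biUnion
      (fun i : Fin m => (E n r).filter fun e => r - 1 ≤ (e ∩ s i).card) := by
    intro e he
    rw [hbad, Finset.mem_filter] at he
    obtain ⟨heE, i, hi⟩ := he
    exact Finset.mem_biUnion.mpr ⟨i, Finset.mem_univ i, Finset.mem_filter.mpr ⟨heE, hi⟩⟩
  have hbadcard : bad.card ≤ m * (r * n) := by
    calc bad.card ≤ (Finset.univ.biUnion
        (fun i : Fin m => (E n r).filter fun e => r - 1 ≤ (e ∩ s i).card)).card :=
          Finset.card_le_card hbadsub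
      _ ≤ ∑ i : Fin m, ((E n r).filter fun e => r - 1 ≤ (e ∩ s i).card).card :=
          Finset.card_biUnion_le
      _ ≤ ∑ _i : Fin m, r * n :=
          Finset.sum_le_sum (fun i _ => bad_card hr (card_of_mem_E (hs i)))
      _ = m * (r * n) := by simp [Finset.sum_const, mul_comm]
  have hsub2 : bad ⊆ E n r := Finset.filter_subset _ _
  rw [h1, Finset.card_sdiff_of_subset hsub2, card_E]
  omega

/-- The step inequality for the sequence counting. -/
lemma step_card {n r m : ℕ} (hr : 1 ≤ r) :
    (T n r m).card * (n.choose r - m * (r * n)) ≤ (T n r (m + 1)).card := by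
  classical
  set good : (Fin m → Finset (Fin n)) → Finset (Finset (Fin n)) :=
    fun s => (E n r).filter fun e => ∀ i, (e ∩ s i).card < r - 1 with hgood
  set S : Finset (Σ _ : Fin m → Finset (Fin n), Finset (Fin n)) :=
    (T n r m).sigma good with hS
  have hinj : Set.InjOn
      (fun p : Σ _ : Fin m → Finset (Fin n), Finset (Fin n) =>
        (Fin.snoc p.1 p.2 : Fin (m + 1) → Finset (Fin n))) S := by
    intro a _ b _ hab
    have h1 : a.1 = b.1 := by
      have := congrArg Fin.init hab
      rwa [Fin.init_snoc, Fin.init_snoc] at this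
    have h2 : a.2 = b.2 := by
      have := congrArg (fun f => f (Fin.last m)) hab
      simpa [Fin.snoc_last] using this
    exact Sigma.ext h1 (heq_of_eq h2)
  have hmaps : ∀ p ∈ S,
      (Fin.snoc p.1 p.2 : Fin (m + 1) → Finset (Fin n)) ∈ T n r (m + 1) := by
    rintro ⟨s, e⟩ hp
    rw [hS, Finset.mem_sigma] at hp
    obtain ⟨hsT, he⟩ := hp
    rw [hgood, Finset.mem_filter] at he
    obtain ⟨heE, hesmall⟩ := he
    obtain ⟨hs1, hs2⟩ := mem_T.mp hsT
    refine mem_T.mpr ⟨?_, ?_⟩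
    · intro i
      refine Fin.lastCases ?_ ?_ i
      · simpa using heE
      · intro j; simpa using hs1 j
    · intro i j
      refine Fin.lastCases ?_ ?_ i
      · refine Fin.lastCases ?_ ?_ j
        · intro h; exact absurd rfl h
        · intro j' _
          simpa [Fin.snoc_last, Fin.snoc_castSucc] using hesmall j'
      · intro i'
        refine Fin.lastCases ?_ ?_ j
        · intro _
          simpa [Fin.snoc_last, Fin.snoc_castSucc, Finset.inter_comm] using hesmall i'
        · intro j' hij'
          have hne : i' ≠ j' := by
            intro h; exact hij' (by rw [h])
          simpa [Fin.snoc_castSucc] using hs2 i' j' hne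
  have himg : S.image (fun p : Σ _ : Fin m → Finset (Fin n), Finset (Fin n) =>
      (Fin.snoc p.1 p.2 : Fin (m + 1) → Finset (Fin n))) ⊆ T n r (m + 1) := by
    intro x hx
    obtain ⟨p, hp, rfl⟩ := Finset.mem_image.mp hx
    exact hmaps p hp
  calc (T n r m).card * (n.choose r - m * (r * n))
      = ∑ _s ∈ T n r m, (n.choose r - m * (r * n)) := by simp [mul_comm]
    _ ≤ ∑ s ∈ T n r m, (good s).card := by
        refine Finset.sum_le_sum (fun s hs => ?_)
        exact good_card hr (mem_T.mp hs).1
    _ = S.card := (Finset.card_sigma _ _).symm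
    _ = (S.image (fun p : Σ _ : Fin m → Finset (Fin n), Finset (Fin n) =>
          (Fin.snoc p.1 p.2 : Fin (m + 1) → Finset (Fin n)))).card :=
        (Finset.card_image_of_injOn hinj).symm
    _ ≤ (T n r (m + 1)).card := Finset.card_le_card himg

lemma T_lower {n r : ℕ} (hr : 1 ≤ r) (m : ℕ)
    (hC : m * (r * n) + m * n ≤ n.choose r) :
    ∀ k, k ≤ m → (m * n) ^ k ≤ (T n r k).card := by
  intro k
  induction k with
  | zero =>
    intro _
    have : (fun i : Fin 0 => (i.elim0 : Finset (Fin n))) ∈ T n r 0 :=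
      mem_T.mpr ⟨fun i => i.elim0, fun i => i.elim0⟩
    simpa using Finset.card_pos.mpr ⟨_, this⟩
  | succ k ih =>
    intro hk
    have hk' : k ≤ m := by omega
    have hfac : m * n ≤ n.choose r - k * (r * n) := by
      have h1 : k * (r * n) ≤ m * (r * n) := Nat.mul_le_mul_right _ hk'
      omega
    calc (m * n) ^ (k + 1) = (m * n) ^ k * (m * n) := pow_succ _ _
      _ ≤ (T n r k).card * (n.choose r - k * (r * n)) :=
          Nat.mul_le_mul (ih hk') hfac
      _ ≤ (T n r (k + 1)).card := step_card hr

lemma T_injective {n r m : ℕ} (hr : 1 ≤ r) {s : Fin m → Finset (Fin n)}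
    (hs : s ∈ T n r m) : Function.Injective s := by
  obtain ⟨h1, h2⟩ := mem_T.mp hs
  intro i j hij
  by_contra hne
  have h3 := h2 i j hne
  rw [hij, Finset.inter_self] at h3
  have h4 : (s j).card = r := card_of_mem_E (h1 j)
  omega

lemma image_mem_Mset {n r m : ℕ} {s : Fin m → Finset (Fin n)}
    (hs : s ∈ T n r m) : Finset.image s Finset.univ ∈ Mset n r := by
  classical
  obtain ⟨h1, h2⟩ := mem_T.mp hs
  rw [Mset, Finset.mem_filter]
  constructor
  · rw [rGraphs, Finset.mem_powerset]
    intro e he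
    obtain ⟨i, _, rfl⟩ := Finset.mem_image.mp he
    exact h1 i
  · intro A hA
    rw [Finset.card_le_one]
    intro e₁ h₁ e₂ h₂
    rw [Finset.mem_filter] at h₁ h₂
    obtain ⟨he₁, hA₁⟩ := h₁
    obtain ⟨he₂, hA₂⟩ := h₂
    obtain ⟨i, _, rfl⟩ := Finset.mem_image.mp he₁
    obtain ⟨j, _, rfl⟩ := Finset.mem_image.mp he₂
    by_contra hne
    have hij : i ≠ j := fun h => hne (by rw [h])
    have h3 := h2 i j hij
    have h4 : r - 1 ≤ (s i ∩ s j).card := by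
      rw [← hA]
      exact Finset.card_le_card (Finset.subset_inter hA₁ hA₂)
    omega

lemma T_upper {n r : ℕ} (hr : 1 ≤ r) (m : ℕ) :
    (T n r m).card ≤ m.factorial * (Mset n r).card := by
  classical
  have key := Finset.card_le_mul_card_image
    (f := fun s : Fin m → Finset (Fin n) => Finset.image s Finset.univ)
    (T n r m) (m.factorial) ?_
  · refine key.trans ?_
    refine Nat.mul_le_mul_left _ (Finset.card_le_card ?_)
    intro G hG
    obtain ⟨s, hs, rfl⟩ := Finset.mem_image.mp hG
    exact image_mem_Mset hs
  · intro G hG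
    obtain ⟨s₀, hs₀T, hs₀G⟩ := Finset.mem_image.mp hG
    have hGcard : G.card = m := by
      rw [← hs₀G, Finset.card_image_of_injective _ (T_injective hr hs₀T),
        Finset.card_univ, Fintype.card_fin]
    set F := (T n r m).filter
      (fun s : Fin m → Finset (Fin n) => Finset.image s Finset.univ = G) with hF
    have hmemG : ∀ (s : Fin m → Finset (Fin n)), s ∈ F → ∀ i, s i ∈ G := by
      intro s hsF i
      rw [hF, Finset.mem_filter] at hsF
      rw [← hsF.2]
      exact Finset.mem_image_of_mem s (Finset.mem_univ i)
    have hinjF : ∀ (s : Fin m → Finset (Fin n)), s ∈ F → Function.Injective s := by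
      intro s hsF
      rw [hF, Finset.mem_filter] at hsF
      exact T_injective hr hsF.1
    let g : {x // x ∈ F} → (Fin m ↪ {y // y ∈ G}) := fun x =>
      ⟨fun i => ⟨x.1 i, hmemG x.1 x.2 i⟩, fun i j hij =>
        hinjF x.1 x.2 (by simpa using hij)⟩
    have hginj : Function.Injective g := by
      intro x y hxy
      apply Subtype.ext
      funext i
      have := congrArg (fun e => (e.toFun i : Finset (Fin n))) hxy
      simpa [g] using this
    calc F.card = Fintype.card {x // x ∈ F} := (Fintype.card_coe F).symm
      _ ≤ Fintype.card (Fin m ↪ {y // y ∈ G}) := Fintype.card_le_of_injective g hginj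
      _ = (Fintype.card {y // y ∈ G}).descFactorial (Fintype.card (Fin m)) :=
          Fintype.card_embedding_eq
      _ = m.factorial := by
          rw [Fintype.card_coe, hGcard, Fintype.card_fin, Nat.descFactorial_self]

lemma Mset_card_ge {n r : ℕ} (hr : 1 ≤ r) (m : ℕ) (hm : 1 ≤ m)
    (hC : m * (r * n) + m * n ≤ n.choose r) : n ^ m ≤ (Mset n r).card := by
  have h1 : (m * n) ^ m ≤ (T n r m).card := T_lower hr m hC m le_rfl
  have h2 : (T n r m).card ≤ m.factorial * (Mset n r).card := T_upper hr m
  have h3 : m.factorial ≤ m ^ m := Nat.factorial_le_pow m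
  have h4 : m ^ m * n ^ m ≤ m ^ m * (Mset n r).card := by
    calc m ^ m * n ^ m = (m * n) ^ m := (mul_pow _ _ _).symm
      _ ≤ (T n r m).card := h1
      _ ≤ m.factorial * (Mset n r).card := h2
      _ ≤ m ^ m * (Mset n r).card := Nat.mul_le_mul_right _ h3
  have h5 : 0 < m ^ m := Nat.pow_pos (by omega)
  exact Nat.le_of_mul_le_mul_left h4 h5

lemma succ_pow_lower (a k : ℕ) : a ^ (k + 1) + (k + 1) * a ^ k ≤ (a + 1) ^ (k + 1) := by
  induction k with
  | zero => simp [pow_succ]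
  | succ k ih =>
    have h1 : (a + 1) ^ (k + 1 + 1) = (a + 1) * (a + 1) ^ (k + 1) := by ring
    have h2 : (a + 1) * (a ^ (k + 1) + (k + 1) * a ^ k)
        = a ^ (k + 1 + 1) + (k + 1 + 1) * a ^ (k + 1) + (k + 1) * a ^ k := by ring
    have h3 := Nat.mul_le_mul_left (a + 1) ih
    omega

lemma pow_add_lower (b c k : ℕ) :
    (b + c) ^ (k + 1) ≤ b ^ (k + 1) + (k + 1) * c * (b + c) ^ k := by
  induction k with
  | zero => simp
  | succ k ih =>
    have h1 := Nat.mul_le_mul_left (b + c) ih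
    have h2 : (b + c) * (b ^ (k + 1) + (k + 1) * c * (b + c) ^ k)
        = b ^ (k + 1 + 1) + c * b ^ (k + 1) + (k + 1) * c * (b + c) ^ (k + 1) := by ring
    have h3 : c * b ^ (k + 1) ≤ c * (b + c) ^ (k + 1) :=
      Nat.mul_le_mul_left _ (Nat.pow_le_pow_left (by omega) _)
    have h4 : (b + c) ^ (k + 1 + 1) = (b + c) * (b + c) ^ (k + 1) := by ring
    have h5 : (k + 1 + 1) * c * (b + c) ^ (k + 1)
        = (k + 1) * c * (b + c) ^ (k + 1) + c * (b + c) ^ (k + 1) := by ring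
    omega

lemma factorial_succ_le (r : ℕ) (hr : 2 ≤ r) : (r + 1).factorial ≤ r ^ (r + 1) := by
  induction r with
  | zero => exact absurd hr (by omega)
  | succ r ih =>
    rcases Nat.lt_or_ge r 2 with hr2 | hr2
    · interval_cases r
      · exact absurd hr (by omega)
      · decide
    · have ih' := ih hr2
      have h2 : 2 * r ^ (r + 1) ≤ (r + 1) ^ (r + 1) := by
        have h := succ_pow_lower r r
        have h3 : r * r ^ r ≤ (r + 1) * r ^ r := Nat.mul_le_mul_right _ (by omega)
        have h4 : r * r ^ r = r ^ (r + 1) := by ring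
        omega
      have h5 : (r + 1 + 1).factorial = (r + 2) * (r + 1).factorial := by
        rw [Nat.factorial_succ]
      have h6 : (r + 2) * (r + 1).factorial ≤ (r + 2) * r ^ (r + 1) :=
        Nat.mul_le_mul_left _ ih'
      have h7 : (r + 2) * r ^ (r + 1) ≤ 2 * (r + 1) * r ^ (r + 1) :=
        Nat.mul_le_mul_right _ (by omega)
      have h8 : 2 * (r + 1) * r ^ (r + 1) = (r + 1) * (2 * r ^ (r + 1)) := by ring
      have h9 : (r + 1) * (2 * r ^ (r + 1)) ≤ (r + 1) * (r + 1) ^ (r + 1) :=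
        Nat.mul_le_mul_left _ h2
      have h10 : (r + 1) * (r + 1) ^ (r + 1) = (r + 1) ^ (r + 1 + 1) := by ring
      omega

lemma main_arith (r n : ℕ) (hr : 2 ≤ r)
    (hn : 2 * r ^ (r + 1) + 2 * r ^ 2 + r ≤ n) :
    (n ^ (r - 1) / (2 * r ^ (r + 1)) + 1) * (r * n)
      + (n ^ (r - 1) / (2 * r ^ (r + 1)) + 1) * n ≤ n.choose r := by
  set D := 2 * r ^ (r + 1) with hD
  set q := n ^ (r - 1) / D with hq
  have hrn : r ≤ n := by
    have : 0 < r ^ (r + 1) := Nat.pow_pos (by omega)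
    omega
  have hn1 : 1 ≤ n := by omega
  have hDpos : 0 < D := by
    have : 0 < r ^ (r + 1) := Nat.pow_pos (by omega)
    omega
  have hrfacpos : 0 < r.factorial := Nat.factorial_pos r
  -- key product inequality
  have hqD : q * D ≤ n ^ (r - 1) := Nat.div_mul_le_self _ _
  -- the main real-content inequality : n^r + 2 r^(r+1) n ≤ 2 (n-r)^r
  have hA : 2 * (r ^ (r + 1) * n) + 2 * (r ^ 2 * n ^ (r - 1)) ≤ n ^ r := by
    have h1 : n ≤ n ^ (r - 1) := by
      calc n = n ^ 1 := (pow_one n).symm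
        _ ≤ n ^ (r - 1) := Nat.pow_le_pow_right hn1 (by omega)
    have h2 : r ^ (r + 1) * n ≤ r ^ (r + 1) * n ^ (r - 1) :=
      Nat.mul_le_mul_left _ h1
    have h3 : (2 * r ^ (r + 1) + 2 * r ^ 2) * n ^ (r - 1) ≤ n * n ^ (r - 1) :=
      Nat.mul_le_mul_right _ (by omega)
    have h4 : n * n ^ (r - 1) = n ^ r := by
      rw [← pow_succ']
      congr 1
      omega
    have h5 : (2 * r ^ (r + 1) + 2 * r ^ 2) * n ^ (r - 1)
        = 2 * (r ^ (r + 1) * n ^ (r - 1)) + 2 * (r ^ 2 * n ^ (r - 1)) := by ring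
    omega
  have hB : n ^ r ≤ (n - r) ^ r + r ^ 2 * n ^ (r - 1) := by
    obtain ⟨r', hr'⟩ : ∃ r', r = r' + 1 := ⟨r - 1, by omega⟩
    have h := pow_add_lower (n - r) r r'
    rw [Nat.sub_add_cancel hrn] at h
    rw [← hr'] at h
    have hr'' : r' = r - 1 := by omega
    rw [hr''] at h
    have h2 : r * r * n ^ (r - 1) = r ^ 2 * n ^ (r - 1) := by ring
    omega
  have hmain : n ^ r + D * n ≤ 2 * (n - r) ^ r := by
    -- n^r + 2 r^(r+1) n + 2 r^2 n^(r-1) ≤ 2 n^r ≤ 2 (n-r)^r + 2 r^2 n^(r-1)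
    have h1 : D * n = 2 * (r ^ (r + 1) * n) := by rw [hD]; ring
    omega
  -- now multiply out
  have hfin : (q + 1) * ((r * n) + n) * (r.factorial * D) ≤ n.choose r * (r.factorial * D) := by
    have hchoose : (n - r) ^ r * D ≤ n.choose r * (r.factorial * D) := by
      have h1 : (n - r) ^ r ≤ (n + 1 - r) ^ r := Nat.pow_le_pow_left (by omega) r
      have h2 : (n + 1 - r) ^ r ≤ n.descFactorial r := Nat.pow_sub_le_descFactorial n r
      have h3 : n.descFactorial r = r.factorial * n.choose r :=
        Nat.descFactorial_eq_factorial_mul_choose n r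
      calc (n - r) ^ r * D ≤ n.descFactorial r * D :=
            Nat.mul_le_mul_right _ (h1.trans h2)
        _ = n.choose r * (r.factorial * D) := by rw [h3]; ring
    refine le_trans ?_ hchoose
    have hlhs : (q + 1) * ((r * n) + n) * (r.factorial * D)
        = (q * D + D) * ((r + 1) * r.factorial * n) := by ring
    have hfact : (r + 1) * r.factorial = (r + 1).factorial := (Nat.factorial_succ r).symm
    have hfactle : (r + 1) * r.factorial ≤ r ^ (r + 1) := by
      rw [hfact]; exact factorial_succ_le r hr
    have h4 : (q * D + D) * ((r + 1) * r.factorial * n) ≤ (n ^ (r - 1) + D) * (r ^ (r + 1) * n) := by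
      apply Nat.mul_le_mul
      · omega
      · exact Nat.mul_le_mul_right _ hfactle
    have h5 : (n ^ (r - 1) + D) * (r ^ (r + 1) * n) = r ^ (r + 1) * (n ^ (r - 1) * n + D * n) := by
      ring
    have h6 : n ^ (r - 1) * n = n ^ r := by
      rw [← pow_succ]
      congr 1
      omega
    have h7 : r ^ (r + 1) * (n ^ r + D * n) ≤ r ^ (r + 1) * (2 * (n - r) ^ r) :=
      Nat.mul_le_mul_left _ hmain
    have h8 : r ^ (r + 1) * (2 * (n - r) ^ r) = (n - r) ^ r * D := by
      rw [hD]; ring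
    calc (q + 1) * ((r * n) + n) * (r.factorial * D)
        = (q * D + D) * ((r + 1) * r.factorial * n) := hlhs
      _ ≤ (n ^ (r - 1) + D) * (r ^ (r + 1) * n) := h4
      _ = r ^ (r + 1) * (n ^ (r - 1) * n + D * n) := h5
      _ = r ^ (r + 1) * (n ^ r + D * n) := by rw [h6]
      _ ≤ r ^ (r + 1) * (2 * (n - r) ^ r) := h7
      _ = (n - r) ^ r * D := h8
  have hpos : 0 < r.factorial * D := Nat.mul_pos hrfacpos hDpos
  have := Nat.le_of_mul_le_mul_right hfin hpos
  calc (q + 1) * (r * n) + (q + 1) * n = (q + 1) * ((r * n) + n) := by ring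
    _ ≤ n.choose r := this

end MsetAux

/-- For `r ≥ 2` and all large `n`, `|M(n,r)| ≥ n^(n^(r-1)/(2 r^(r+1)))`. -/
theorem Mset_lower_bound (r : ℕ) (hr : 2 ≤ r) :
    ∃ n₀ : ℕ, ∀ n : ℕ, n₀ ≤ n →
      (n : ℝ) ^ ((n : ℝ) ^ (r - 1) / (2 * (r : ℝ) ^ (r + 1))) ≤ ((Mset n r).card : ℝ) := by
  refine ⟨2 * r ^ (r + 1) + 2 * r ^ 2 + r, fun n hn => ?_⟩
  set D := 2 * r ^ (r + 1) with hD
  set m := n ^ (r - 1) / D + 1 with hm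
  have hr1 : 1 ≤ r := by omega
  have hDpos : 0 < D := by
    have : 0 < r ^ (r + 1) := Nat.pow_pos (by omega)
    omega
  have hn1 : 1 ≤ n := by omega
  have hC := MsetAux.main_arith r n hr hn
  have hM : n ^ m ≤ (Mset n r).card :=
    MsetAux.Mset_card_ge hr1 m (Nat.succ_le_succ (Nat.zero_le _)) hC
  have hnR : (1 : ℝ) ≤ (n : ℝ) := by exact_mod_cast hn1
  have hDR : (0 : ℝ) < 2 * (r : ℝ) ^ (r + 1) := by positivity
  have hxm : (n : ℝ) ^ (r - 1) / (2 * (r : ℝ) ^ (r + 1)) ≤ (m : ℝ) := by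
    rw [div_le_iff₀ hDR]
    have hnat : n ^ (r - 1) ≤ m * D := by
      have h1 := Nat.lt_div_mul_add (a := n ^ (r - 1)) (b := D) hDpos
      have h2 : m * D = n ^ (r - 1) / D * D + D := by rw [hm]; ring
      omega
    calc (n : ℝ) ^ (r - 1) = ((n ^ (r - 1) : ℕ) : ℝ) := by push_cast; ring
      _ ≤ ((m * D : ℕ) : ℝ) := by exact_mod_cast hnat
      _ = (m : ℝ) * (2 * (r : ℝ) ^ (r + 1)) := by rw [hD]; push_cast; ring
  calc (n : ℝ) ^ ((n : ℝ) ^ (r - 1) / (2 * (r : ℝ) ^ (r + 1)))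
      ≤ (n : ℝ) ^ (m : ℝ) := Real.rpow_le_rpow_of_exponent_le hnR hxm
    _ = (n : ℝ) ^ (m : ℕ) := Real.rpow_natCast _ _
    _ = ((n ^ m : ℕ) : ℝ) := by push_cast; ring
    _ ≤ ((Mset n r).card : ℝ) := by exact_mod_cast hM
end

section
/- Let r ≥ 2. There exist a real constant c > 0 and a natural number n₀ such that for all n ≥ n₀: 2^{c·n^{r}} ≤ f(n, r, r+1, {3,4,…,r+1}) ≤ 2^{n^{r}}. -/
open Finset

/-! ### Auxiliary construction: the complete `r`-partite `r`-graph by residues mod `r` -/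

def goodH (n r : ℕ) : Finset (Finset (Fin n)) :=
  (Finset.univ.powersetCard r).filter
    (fun e => (e.image (fun x : Fin n => (x : ℕ) % r)).card = r)

lemma card_image_lt_of_eq {α β : Type*} [DecidableEq α] [DecidableEq β] {e : Finset α} {f : α → β}
    {a b : α} (ha : a ∈ e) (hb : b ∈ e) (hab : a ≠ b) (hf : f a = f b) :
    (e.image f).card < e.card := by
  have hsub : e.image f ⊆ (e.erase b).image f := by
    intro y hy
    obtain ⟨z, hz, rfl⟩ := mem_image.mp hy
    by_cases hzb : z = b
    · exact mem_image.mpr ⟨a, mem_erase.mpr ⟨hab, ha⟩, by rw [hf, hzb]⟩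
    · exact mem_image.mpr ⟨z, mem_erase.mpr ⟨hzb, hz⟩, rfl⟩
  calc (e.image f).card ≤ ((e.erase b).image f).card := card_le_card hsub
    _ ≤ (e.erase b).card := card_image_le
    _ < e.card := card_erase_lt_of_mem hb

lemma goodH_filter_card_le_two {n r : ℕ} (hr : 1 ≤ r) (S : Finset (Fin n))
    (hS : S.card = r + 1) :
    ((goodH n r).filter (fun e => e ⊆ S)).card ≤ 2 := by
  obtain ⟨a, ha, b, hb, hab, hfab⟩ := exists_ne_map_eq_of_card_lt_of_maps_to
    (f := fun x : Fin n => (x : ℕ) % r) (t := Finset.range r)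
    (by rw [hS, card_range]; omega)
    (fun x _ => mem_range.mpr (Nat.mod_lt _ hr))
  have hsub : (goodH n r).filter (fun e => e ⊆ S) ⊆ {S.erase a, S.erase b} := by
    intro e he
    rw [mem_filter] at he
    obtain ⟨heH, heS⟩ := he
    rw [goodH, mem_filter, mem_powersetCard] at heH
    obtain ⟨⟨-, hcard⟩, himg⟩ := heH
    have hdiff : (S \ e).card = 1 := by rw [card_sdiff_of_subset heS, hS, hcard]; omega
    obtain ⟨x, hx⟩ := card_eq_one.mp hdiff
    have hxS : x ∈ S := by
      have : x ∈ S \ e := hx ▸ mem_singleton_self x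
      exact (mem_sdiff.mp this).1
    have hex : e = S.erase x := by
      have h1 : S.erase x = S \ {x} := (sdiff_singleton_eq_erase x S).symm
      rw [h1, ← hx, sdiff_sdiff_right_self]
      exact (inf_eq_right.mpr heS).symm
    have hxab : x = a ∨ x = b := by
      by_contra hcon
      push_neg at hcon
      have haE : a ∈ e := by rw [hex]; exact mem_erase.mpr ⟨fun h => hcon.1 h.symm, ha⟩
      have hbE : b ∈ e := by rw [hex]; exact mem_erase.mpr ⟨fun h => hcon.2 h.symm, hb⟩
      have := card_image_lt_of_eq (f := fun x : Fin n => (x : ℕ) % r) haE hbE hab hfab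
      omega
    rcases hxab with h | h
    · rw [hex, h]; exact mem_insert_self _ _
    · rw [hex, h]; exact mem_insert_of_mem (mem_singleton_self _)
  calc ((goodH n r).filter (fun e => e ⊆ S)).card ≤ ({S.erase a, S.erase b} : Finset _).card :=
        card_le_card hsub
    _ ≤ 2 := card_insert_le _ _ |>.trans (by simp)

lemma elt_bound {n r : ℕ} (i : Fin r) (a : Fin (n / r)) : (i : ℕ) + (a : ℕ) * r < n := by
  have h1 : (a : ℕ) + 1 ≤ n / r := a.isLt
  have h2 : n / r * r ≤ n := Nat.div_mul_le_self n r
  have h3 : ((a : ℕ) + 1) * r ≤ n / r * r := Nat.mul_le_mul_right r h1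
  have hi := i.isLt
  nlinarith

noncomputable def embEdge (n r : ℕ) (a : Fin r → Fin (n / r)) : Finset (Fin n) :=
  Finset.univ.image (fun i : Fin r => (⟨(i : ℕ) + (a i : ℕ) * r, elt_bound i (a i)⟩ : Fin n))

lemma embEdge_mem {n r : ℕ} (a : Fin r → Fin (n / r)) :
    embEdge n r a ∈ goodH n r := by
  have hinj : Function.Injective
      (fun i : Fin r => (⟨(i : ℕ) + (a i : ℕ) * r, elt_bound i (a i)⟩ : Fin n)) := by
    intro i j hij
    have h : (i : ℕ) + (a i : ℕ) * r = (j : ℕ) + (a j : ℕ) * r := congrArg Fin.val hij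
    have hmod : ((i : ℕ) + (a i : ℕ) * r) % r = ((j : ℕ) + (a j : ℕ) * r) % r := by rw [h]
    rw [Nat.add_mul_mod_self_right, Nat.add_mul_mod_self_right,
      Nat.mod_eq_of_lt i.isLt, Nat.mod_eq_of_lt j.isLt] at hmod
    exact Fin.ext hmod
  rw [goodH, mem_filter, mem_powersetCard]
  refine ⟨⟨subset_univ _, ?_⟩, ?_⟩
  · rw [embEdge, card_image_of_injective _ hinj, card_univ, Fintype.card_fin]
  · rw [embEdge, image_image]
    have : ((fun x : Fin n => (x : ℕ) % r) ∘
        (fun i : Fin r => (⟨(i : ℕ) + (a i : ℕ) * r, elt_bound i (a i)⟩ : Fin n)))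
        = fun i : Fin r => (i : ℕ) := by
      funext i
      simp [Nat.add_mul_mod_self_right, Nat.mod_eq_of_lt i.isLt]
    rw [this, card_image_of_injective _ Fin.val_injective, card_univ, Fintype.card_fin]

lemma goodH_card_lower {n r : ℕ} (hr : 1 ≤ r) : (n / r) ^ r ≤ (goodH n r).card := by
  have hinj : Set.InjOn (embEdge n r) (Finset.univ : Finset (Fin r → Fin (n / r))) := by
    intro a _ a' _ hee
    funext i
    have hmem : (⟨(i : ℕ) + (a i : ℕ) * r, elt_bound i (a i)⟩ : Fin n) ∈ embEdge n r a' := by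
      rw [← hee, embEdge]; exact mem_image_of_mem _ (mem_univ i)
    rw [embEdge, mem_image] at hmem
    obtain ⟨j, -, hj⟩ := hmem
    have h : (j : ℕ) + (a' j : ℕ) * r = (i : ℕ) + (a i : ℕ) * r := congrArg Fin.val hj
    have hmod : ((j : ℕ) + (a' j : ℕ) * r) % r = ((i : ℕ) + (a i : ℕ) * r) % r := by rw [h]
    rw [Nat.add_mul_mod_self_right, Nat.add_mul_mod_self_right,
      Nat.mod_eq_of_lt i.isLt, Nat.mod_eq_of_lt j.isLt] at hmod
    have hji : j = i := Fin.ext hmod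
    subst hji
    have : (a' j : ℕ) * r = (a j : ℕ) * r := by omega
    have hr0 : 0 < r := hr
    exact Fin.ext (Nat.eq_of_mul_eq_mul_right hr0 this.symm)
  have := Finset.card_le_card_of_injOn (embEdge n r)
    (fun a _ => embEdge_mem a) hinj
  simpa using this

lemma numFree_lower {n r : ℕ} (hr : 2 ≤ r) :
    2 ^ ((n / r) ^ r) ≤ numFree n r (r + 1) (Finset.Icc 3 (r + 1)) := by
  have hsub : (goodH n r).powerset ⊆
      (rGraphs n r).filter (IsLKFree n (r + 1) (Finset.Icc 3 (r + 1))) := by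
    intro G hG
    rw [mem_powerset] at hG
    rw [mem_filter]
    constructor
    · rw [rGraphs, mem_powerset]
      exact hG.trans (filter_subset _ _)
    · intro S hS
      have hle : (G.filter (fun e => e ⊆ S)).card ≤ 2 := by
        calc (G.filter (fun e => e ⊆ S)).card
            ≤ ((goodH n r).filter (fun e => e ⊆ S)).card :=
              card_le_card (filter_subset_filter _ hG)
          _ ≤ 2 := goodH_filter_card_le_two (by omega) S hS
      rw [mem_Icc]
      omega
  calc 2 ^ ((n / r) ^ r) ≤ 2 ^ (goodH n r).card :=
        Nat.pow_le_pow_right (by norm_num) (goodH_card_lower (by omega))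
    _ = (goodH n r).powerset.card := (card_powerset _).symm
    _ ≤ numFree n r (r + 1) (Finset.Icc 3 (r + 1)) := card_le_card hsub

lemma numFree_upper (n r : ℕ) :
    numFree n r (r + 1) (Finset.Icc 3 (r + 1)) ≤ 2 ^ (n ^ r) := by
  calc numFree n r (r + 1) (Finset.Icc 3 (r + 1)) ≤ (rGraphs n r).card :=
        card_le_card (filter_subset _ _)
    _ = 2 ^ (n.choose r) := by
        rw [rGraphs, card_powerset, card_powersetCard, card_univ, Fintype.card_fin]
    _ ≤ 2 ^ (n ^ r) := Nat.pow_le_pow_right (by norm_num) (Nat.choose_le_pow n r)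

/-- Lemma: for `r ≥ 2`, `f(n, r, r+1, {3,4,…,r+1}) = 2^(Θ(n^r))`, with the upper
bound `2^(n^r)`. -/
theorem count_list_3_to_rplus1 (r : ℕ) (hr : 2 ≤ r) :
    ∃ c : ℝ, 0 < c ∧ ∃ n₀ : ℕ, ∀ n : ℕ, n₀ ≤ n →
      (2 : ℝ) ^ (c * (n : ℝ) ^ r) ≤ (numFree n r (r + 1) (Finset.Icc 3 (r + 1)) : ℝ) ∧
      (numFree n r (r + 1) (Finset.Icc 3 (r + 1)) : ℝ) ≤ (2 : ℝ) ^ ((n : ℝ) ^ r) := by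
  refine ⟨(1 / (2 * r : ℝ)) ^ r, by positivity, 2 * r, fun n hn => ?_⟩
  have hr0 : (0 : ℝ) < 2 * r := by positivity
  constructor
  · -- lower bound
    have hnat : n ≤ 2 * (r * (n / r)) := by
      have h1 := Nat.div_add_mod n r
      have h2 : n % r < r := Nat.mod_lt n (by omega)
      omega
    have hkey : (n : ℝ) / (2 * r) ≤ ((n / r : ℕ) : ℝ) := by
      rw [div_le_iff₀ hr0]
      have h3 : (n : ℝ) ≤ ((2 * (r * (n / r)) : ℕ) : ℝ) := by exact_mod_cast hnat
      push_cast at h3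
      linarith
    have hexp : (1 / (2 * r : ℝ)) ^ r * (n : ℝ) ^ r ≤ (((n / r) ^ r : ℕ) : ℝ) := by
      push_cast
      calc (1 / (2 * r : ℝ)) ^ r * (n : ℝ) ^ r = ((n : ℝ) / (2 * r)) ^ r := by
            rw [← mul_pow]; ring_nf
        _ ≤ (((n / r : ℕ) : ℝ)) ^ r :=
            pow_le_pow_left₀ (by positivity) hkey r
    calc (2 : ℝ) ^ ((1 / (2 * r : ℝ)) ^ r * (n : ℝ) ^ r)
        ≤ (2 : ℝ) ^ ((((n / r) ^ r : ℕ) : ℝ)) :=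
          Real.rpow_le_rpow_of_exponent_le one_le_two hexp
      _ = ((2 ^ ((n / r) ^ r) : ℕ) : ℝ) := by
          rw [Real.rpow_natCast]; push_cast; ring
      _ ≤ (numFree n r (r + 1) (Finset.Icc 3 (r + 1)) : ℝ) := by
          exact_mod_cast numFree_lower hr
  · -- upper bound
    calc (numFree n r (r + 1) (Finset.Icc 3 (r + 1)) : ℝ)
        ≤ ((2 ^ (n ^ r) : ℕ) : ℝ) := by exact_mod_cast numFree_upper n r
      _ = (2 : ℝ) ^ (((n ^ r : ℕ)) : ℝ) := by
          rw [Real.rpow_natCast]; push_cast; ring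
      _ = (2 : ℝ) ^ ((n : ℝ) ^ r) := by push_cast; ring_nf
end

section
/- Let m ≥ 1 and let G = ([m], f) be a CSP in which every constraint f({a,b}) belongs to 𝒞 = {{(1,0),(0,1)}, {(0,0)}, {(1,1)}}. Then the number of satisfying assignments of G is at most m + 1, i.e., |A(G)| ≤ m + 1. -/
open Finset

/-- The family `𝒞` of constraints: `{(1,0),(0,1)}`, `{(0,0)}` and `{(1,1)}`,
viewed as subsets of `{0,1} × {0,1}`. -/
def constraintFamily : Finset (Finset (Fin 2 × Fin 2)) :=
  {{(1, 0), (0, 1)}, {(0, 0)}, {(1, 1)}}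


lemma reconstruct {m : ℕ} (A0 A : Finset (Fin m)) :
    (A0 \ (A0 \ A)) ∪ (A \ A0) = A := by
  ext x
  simp only [Finset.mem_union, Finset.mem_sdiff]
  tauto

lemma two_le_card {m : ℕ} {s : Finset (Fin m)} {x y : Fin m}
    (hx : x ∈ s) (hy : y ∈ s) (hxy : x ≠ y) : 2 ≤ s.card :=
  Finset.one_lt_card.mpr ⟨x, hx, y, hy, hxy⟩

lemma famLemma {m : ℕ} (F : Finset (Finset (Fin m)))
    (h : ∀ A ∈ F, ∀ B ∈ F, (A \ B).card ≤ 1) : F.card ≤ m + 1 := by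
  classical
  rcases F.eq_empty_or_nonempty with rfl | hne
  · simp
  obtain ⟨A0, hA0F, hmin⟩ := F.exists_min_image Finset.card hne
  have hd1 : ∀ A ∈ F, A ≠ A0 → (A \ A0).card = 1 := by
    intro A hA hne'
    have hle := h A hA A0 hA0F
    have h0 : (A \ A0).card ≠ 0 := by
      intro h0
      have hsub : A ⊆ A0 := Finset.sdiff_eq_empty_iff_subset.mp (Finset.card_eq_zero.mp h0)
      exact hne' (Finset.eq_of_subset_of_card_le hsub (hmin A hA))
    omega
  have he1 : ∀ A ∈ F, ¬ A0 ⊆ A → (A0 \ A).card = 1 := by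
    intro A hA hns
    have hle := h A0 hA0F A hA
    have h0 : (A0 \ A).card ≠ 0 := by
      intro h0
      exact hns (Finset.sdiff_eq_empty_iff_subset.mp (Finset.card_eq_zero.mp h0))
    omega
  set Adds := F.filter (fun A => A ≠ A0 ∧ A0 ⊆ A) with hAdds
  set Swaps := F.filter (fun A => ¬ A0 ⊆ A) with hSwaps
  have hSwne : ∀ A ∈ Swaps, A ≠ A0 := by
    intro A hA
    have := (Finset.mem_filter.mp hA).2
    intro hAA0; exact this (hAA0 ▸ Finset.Subset.refl A0)
  have hcover : F ⊆ insert A0 (Adds ∪ Swaps) := by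
    intro A hA
    by_cases h1 : A = A0
    · simp [h1]
    by_cases h2 : A0 ⊆ A
    · exact Finset.mem_insert_of_mem (Finset.mem_union_left _ (Finset.mem_filter.mpr ⟨hA, h1, h2⟩))
    · exact Finset.mem_insert_of_mem (Finset.mem_union_right _ (Finset.mem_filter.mpr ⟨hA, h2⟩))
  have hF : F.card ≤ 1 + (Adds.card + Swaps.card) := by
    calc F.card ≤ (insert A0 (Adds ∪ Swaps)).card := Finset.card_le_card hcover
    _ ≤ (Adds ∪ Swaps).card + 1 := Finset.card_insert_le _ _
    _ ≤ 1 + (Adds.card + Swaps.card) := by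
        have := Finset.card_union_le Adds Swaps
        omega
  have hAddsCard : Adds.card ≤ (((Finset.univ : Finset (Fin m)) \ A0).powersetCard 1).card := by
    apply Finset.card_le_card_of_injOn (fun A => A \ A0)
    · intro A hA
      obtain ⟨hAF, hne', hsub⟩ := Finset.mem_filter.mp hA
      rw [Finset.mem_coe, Finset.mem_powersetCard]
      exact ⟨Finset.sdiff_subset_sdiff (Finset.subset_univ _) (Finset.Subset.refl _),
        hd1 A hAF hne'⟩
    · intro A hA B hB hAB
      obtain ⟨hAF, hneA, hsubA⟩ := Finset.mem_filter.mp hA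
      obtain ⟨hBF, hneB, hsubB⟩ := Finset.mem_filter.mp hB
      have hAB' : A \ A0 = B \ A0 := hAB
      rw [← Finset.union_sdiff_of_subset hsubA, ← Finset.union_sdiff_of_subset hsubB, hAB']
  have hpow1 : (((Finset.univ : Finset (Fin m)) \ A0).powersetCard 1).card = m - A0.card := by
    rw [Finset.card_powersetCard, Nat.choose_one_right,
      Finset.card_sdiff_of_subset (Finset.subset_univ _), Finset.card_univ, Fintype.card_fin]
  have hA0le : A0.card ≤ m := by
    have := Finset.card_le_card (Finset.subset_univ A0)
    simpa using this
  by_cases hP : ∀ A ∈ Swaps, ∀ B ∈ Swaps, A \ A0 = B \ A0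
  · have hSw : Swaps.card ≤ (A0.powersetCard 1).card := by
      apply Finset.card_le_card_of_injOn (fun A => A0 \ A)
      · intro A hA
        obtain ⟨hAF, hns⟩ := Finset.mem_filter.mp hA
        rw [Finset.mem_coe, Finset.mem_powersetCard]
        exact ⟨Finset.sdiff_subset, he1 A hAF hns⟩
      · intro A hA B hB hAB
        have hAB' : A0 \ A = A0 \ B := hAB
        have hx := hP A hA B hB
        rw [← reconstruct A0 A, ← reconstruct A0 B, hAB', hx]
    have hpow2 : (A0.powersetCard 1).card = A0.card := by
      rw [Finset.card_powersetCard, Nat.choose_one_right]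
    omega
  · push_neg at hP
    obtain ⟨A1, hA1, A2, hA2, h12⟩ := hP
    -- data for swaps
    have hdata : ∀ A ∈ Swaps, ∃ x y, A \ A0 = {x} ∧ A0 \ A = {y} := by
      intro A hA
      obtain ⟨hAF, hns⟩ := Finset.mem_filter.mp hA
      obtain ⟨x, hx⟩ := Finset.card_eq_one.mp (hd1 A hAF (hSwne A hA))
      obtain ⟨y, hy⟩ := Finset.card_eq_one.mp (he1 A hAF hns)
      exact ⟨x, y, hx, hy⟩
    have fact1 : ∀ A ∈ Swaps, ∀ B ∈ Swaps, A \ A0 ≠ B \ A0 → A0 \ A = A0 \ B := by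
      intro A hA B hB hxAB
      obtain ⟨xa, ya, hxa, hya⟩ := hdata A hA
      obtain ⟨xb, yb, hxb, hyb⟩ := hdata B hB
      have hxne : xa ≠ xb := by
        intro hh; apply hxAB; rw [hxa, hxb, hh]
      by_contra hyne'
      have hyne : ya ≠ yb := by
        intro hh; apply hyne'; rw [hya, hyb, hh]
      -- xa ∈ A \ B, yb ∈ A \ B
      have hxaA : xa ∈ A ∧ xa ∉ A0 := by
        have : xa ∈ A \ A0 := by rw [hxa]; exact Finset.mem_singleton_self xa
        exact ⟨(Finset.mem_sdiff.mp this).1, (Finset.mem_sdiff.mp this).2⟩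
      have hybB : yb ∈ A0 ∧ yb ∉ B := by
        have : yb ∈ A0 \ B := by rw [hyb]; exact Finset.mem_singleton_self yb
        exact ⟨(Finset.mem_sdiff.mp this).1, (Finset.mem_sdiff.mp this).2⟩
      have hxaB : xa ∉ B := by
        intro hmem
        have : xa ∈ B \ A0 := Finset.mem_sdiff.mpr ⟨hmem, hxaA.2⟩
        rw [hxb] at this
        exact hxne (Finset.mem_singleton.mp this)
      have hybA : yb ∈ A := by
        by_contra hnot
        have : yb ∈ A0 \ A := Finset.mem_sdiff.mpr ⟨hybB.1, hnot⟩
        rw [hya] at this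
        exact hyne ((Finset.mem_singleton.mp this).symm)
      have h2le : 2 ≤ (A \ B).card := by
        apply two_le_card (x := xa) (y := yb)
        · exact Finset.mem_sdiff.mpr ⟨hxaA.1, hxaB⟩
        · exact Finset.mem_sdiff.mpr ⟨hybA, hybB.2⟩
        · intro hh; exact hxaA.2 (hh ▸ hybB.1)
      have := h A (Finset.mem_filter.mp hA).1 B (Finset.mem_filter.mp hB).1
      omega
    have hy : ∀ A ∈ Swaps, A0 \ A = A0 \ A1 := by
      intro A hA
      by_cases hx : A \ A0 = A1 \ A0
      · have e1 : A0 \ A = A0 \ A2 := fact1 A hA A2 hA2 (by rw [hx]; exact h12)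
        have e2 : A0 \ A1 = A0 \ A2 := fact1 A1 hA1 A2 hA2 h12
        rw [e1, e2]
      · exact fact1 A hA A1 hA1 hx
    have hAdds0 : Adds = ∅ := by
      rw [Finset.eq_empty_iff_forall_notMem]
      intro A hA
      obtain ⟨hAF, hne', hsub⟩ := Finset.mem_filter.mp hA
      obtain ⟨x, hx⟩ := Finset.card_eq_one.mp (hd1 A hAF hne')
      have hxA : x ∈ A ∧ x ∉ A0 := by
        have : x ∈ A \ A0 := by rw [hx]; exact Finset.mem_singleton_self x
        exact ⟨(Finset.mem_sdiff.mp this).1, (Finset.mem_sdiff.mp this).2⟩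
      have fact2 : ∀ B ∈ Swaps, A \ A0 = B \ A0 := by
        intro B hB
        obtain ⟨xb, yb, hxb, hyb⟩ := hdata B hB
        rw [hx, hxb]
        by_contra hne2
        have hxne : x ≠ xb := by
          intro hh; exact hne2 (by rw [hh])
        have hybB : yb ∈ A0 ∧ yb ∉ B := by
          have : yb ∈ A0 \ B := by rw [hyb]; exact Finset.mem_singleton_self yb
          exact ⟨(Finset.mem_sdiff.mp this).1, (Finset.mem_sdiff.mp this).2⟩
        have hxB : x ∉ B := by
          intro hmem
          have : x ∈ B \ A0 := Finset.mem_sdiff.mpr ⟨hmem, hxA.2⟩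
          rw [hxb] at this
          exact hxne (Finset.mem_singleton.mp this)
        have h2le : 2 ≤ (A \ B).card := by
          apply two_le_card (x := x) (y := yb)
          · exact Finset.mem_sdiff.mpr ⟨hxA.1, hxB⟩
          · exact Finset.mem_sdiff.mpr ⟨hsub hybB.1, hybB.2⟩
          · intro hh; exact hxA.2 (hh ▸ hybB.1)
        have := h A hAF B (Finset.mem_filter.mp hB).1
        omega
      have e1 := fact2 A1 hA1
      have e2 := fact2 A2 hA2
      exact h12 (e1 ▸ e2)
    have hSw : Swaps.card ≤ (((Finset.univ : Finset (Fin m)) \ A0).powersetCard 1).card := by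
      apply Finset.card_le_card_of_injOn (fun A => A \ A0)
      · intro A hA
        obtain ⟨hAF, hns⟩ := Finset.mem_filter.mp hA
        rw [Finset.mem_coe, Finset.mem_powersetCard]
        exact ⟨Finset.sdiff_subset_sdiff (Finset.subset_univ _) (Finset.Subset.refl _),
          hd1 A hAF (hSwne A hA)⟩
      · intro A hA B hB hAB
        have hAB' : A \ A0 = B \ A0 := hAB
        have hyA := hy A hA
        have hyB := hy B hB
        rw [← reconstruct A0 A, ← reconstruct A0 B, hAB', hyA, hyB]
    rw [hAdds0] at hF
    simp at hF
    omega

lemma main_aux : ∀ (m : ℕ) (f : Fin m → Fin m → Finset (Fin 2 × Fin 2)),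
    (∀ a b : Fin m, a < b → f a b ∈ constraintFamily) →
    (Finset.univ.filter
      (fun g : Fin m → Fin 2 => ∀ a b : Fin m, a < b → (g a, g b) ∉ f a b)).card ≤ m + 1 := by
  intro m
  induction m with
  | zero =>
    intro f hf
    exact le_trans (Finset.card_filter_le _ _) (by simp)
  | succ n ih =>
    intro f hf
    by_cases heqc : ∃ a b : Fin (n+1), a < b ∧ f a b = ({(1,0),(0,1)} : Finset (Fin 2 × Fin 2))
    · obtain ⟨a, b, hab, hfab⟩ := heqc
      set f' : Fin n → Fin n → Finset (Fin 2 × Fin 2) :=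
        fun i j => f (b.succAbove i) (b.succAbove j) with hf'def
      have hf' : ∀ i j : Fin n, i < j → f' i j ∈ constraintFamily := by
        intro i j hij
        exact hf _ _ (Fin.strictMono_succAbove b hij)
      have key := ih f' hf'
      have hforce : ∀ x y : Fin 2, (x, y) ∉ ({(1,0),(0,1)} : Finset (Fin 2 × Fin 2)) → y = x := by
        decide
      have hinj : (Finset.univ.filter
          (fun g : Fin (n+1) → Fin 2 => ∀ a b : Fin (n+1), a < b → (g a, g b) ∉ f a b)).card ≤
          (Finset.univ.filter
          (fun g : Fin n → Fin 2 => ∀ i j : Fin n, i < j → (g i, g j) ∉ f' i j)).card := by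
        apply Finset.card_le_card_of_injOn (fun g => g ∘ b.succAbove)
        · intro g hg
          simp only [Finset.mem_coe, Finset.mem_filter, Finset.mem_univ, true_and] at hg ⊢
          intro i j hij
          exact hg _ _ (Fin.strictMono_succAbove b hij)
        · intro g hg g' hg' hgg'
          simp only [Finset.mem_coe, Finset.mem_filter, Finset.mem_univ, true_and] at hg hg'
          have hgg'' : ∀ i : Fin n, g (b.succAbove i) = g' (b.succAbove i) := by
            intro i; exact congrFun hgg' i
          funext v
          by_cases hv : v = b
          · subst hv
            have h1 : g v = g a := hforce _ _ (hfab ▸ hg a v hab)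
            have h2 : g' v = g' a := hforce _ _ (hfab ▸ hg' a v hab)
            obtain ⟨i, hi⟩ := Fin.exists_succAbove_eq (ne_of_lt hab)
            rw [h1, h2, ← hi, hgg'' i]
          · obtain ⟨i, hi⟩ := Fin.exists_succAbove_eq hv
            rw [← hi, hgg'' i]
      exact le_trans hinj (le_trans key (Nat.le_succ _))
    · have hfab : ∀ a b : Fin (n+1), a < b →
          f a b = ({(0,0)} : Finset (Fin 2 × Fin 2)) ∨
          f a b = ({(1,1)} : Finset (Fin 2 × Fin 2)) := by
        intro a b hab
        have hm := hf a b hab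
        simp only [constraintFamily, Finset.mem_insert, Finset.mem_singleton] at hm
        rcases hm with h1 | h1 | h1
        · exact absurd ⟨a, b, hab, h1⟩ heqc
        · exact Or.inl h1
        · exact Or.inr h1
      set S := Finset.univ.filter
        (fun g : Fin (n+1) → Fin 2 => ∀ a b : Fin (n+1), a < b → (g a, g b) ∉ f a b) with hS
      set Z : (Fin (n+1) → Fin 2) → Finset (Fin (n+1)) :=
        fun g => Finset.univ.filter (fun v => g v = 0) with hZ
      have hZmem : ∀ (g : Fin (n+1) → Fin 2) (v : Fin (n+1)), v ∈ Z g ↔ g v = 0 := by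
        intro g v; simp [hZ]
      have htwo : ∀ x : Fin 2, x = 0 ∨ x = 1 := by decide
      have hZinj : Set.InjOn Z S := by
        intro g hg g' hg' hZg
        funext v
        rcases htwo (g v) with h0 | h1
        · have : v ∈ Z g := (hZmem g v).mpr h0
          rw [hZg] at this
          rw [h0, (hZmem g' v).mp this]
        · have hv0 : v ∉ Z g := by
            rw [hZmem]; rw [h1]; decide
          rw [hZg] at hv0
          rw [hZmem] at hv0
          rcases htwo (g' v) with h0' | h1'
          · exact absurd h0' hv0
          · rw [h1, h1']
      have hcardim : S.card = (S.image Z).card := (Finset.card_image_of_injOn hZinj).symm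
      have hfam : ∀ A ∈ S.image Z, ∀ B ∈ S.image Z, (A \ B).card ≤ 1 := by
        intro A hA B hB
        obtain ⟨g, hg, rfl⟩ := Finset.mem_image.mp hA
        obtain ⟨g', hg', rfl⟩ := Finset.mem_image.mp hB
        simp only [hS, Finset.mem_filter, Finset.mem_univ, true_and] at hg hg'
        by_contra hgt
        push_neg at hgt
        obtain ⟨z1, hz1, z2, hz2, hz12⟩ := Finset.one_lt_card.mp hgt
        -- memberships
        have hprop : ∀ z, z ∈ Z g \ Z g' → g z = 0 ∧ g' z = 1 := by
          intro z hz
          obtain ⟨hz1', hz2'⟩ := Finset.mem_sdiff.mp hz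
          refine ⟨(hZmem g z).mp hz1', ?_⟩
          have := (hZmem g' z).not.mp hz2'
          rcases htwo (g' z) with h0 | h1
          · exact absurd h0 this
          · exact h1
        obtain ⟨hg1, hg1'⟩ := hprop z1 hz1
        obtain ⟨hg2, hg2'⟩ := hprop z2 hz2
        have hkey : ∀ u v : Fin (n+1), u < v → g u = 0 → g v = 0 → g' u = 1 → g' v = 1 → False := by
          intro u v huv hu hv hu' hv'
          rcases hfab u v huv with h00 | h11
          · apply hg u v huv
            rw [h00, hu, hv]
            decide
          · apply hg' u v huv
            rw [h11, hu', hv']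
            decide
        rcases lt_or_gt_of_ne hz12 with hlt | hlt
        · exact hkey z1 z2 hlt hg1 hg2 hg1' hg2'
        · exact hkey z2 z1 hlt hg2 hg1 hg2' hg1'
      have := famLemma (S.image Z) hfam
      omega

/-- Lemma (CSP counting): if `G = ([m], f)` is a CSP all of whose constraints belong
to `𝒞 = {{(1,0),(0,1)}, {(0,0)}, {(1,1)}}`, then the number of satisfying
assignments of `G` is at most `m + 1`. -/
theorem csp_count (m : ℕ) (hm : 1 ≤ m)
    (f : Fin m → Fin m → Finset (Fin 2 × Fin 2))
    (hf : ∀ a b : Fin m, a < b → f a b ∈ constraintFamily) :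
    (Finset.univ.filter
      (fun g : Fin m → Fin 2 => ∀ a b : Fin m, a < b → (g a, g b) ∉ f a b)).card
        ≤ m + 1 :=
  main_aux m f hf
end

section
/- Let n, r, k, a be natural numbers with k > r and n > r−1 > a, and let L ⊆ {0,1,…,C(k,r)} be any list. Then d(a,n) ≤ ∏_{v=r}^{n} d(a+1, v). -/
open Finset

/-- `D(A,H,n)`: the `(L,k)`-free `r`-graphs `G` on `[n]` such that every edge of the
symmetric difference `E(G) △ E(H)` contains `A`. -/
def Dset (n r k : ℕ) (L : Finset ℕ) (A : Finset (Fin n)) (H : Finset (Finset (Fin n))) :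
    Finset (Finset (Finset (Fin n))) :=
  ((rGraphs n r).filter (IsLKFree n k L)).filter
    (fun G => ∀ e ∈ (G \ H) ∪ (H \ G), A ⊆ e)

/-- `d(a,n)`: the maximum of `|D(A,H,n)|` over `(L,k)`-free `r`-graphs `H` on `[n]`
and `a`-element sets `A ⊆ [n]`. -/
def dmax (n r k : ℕ) (L : Finset ℕ) (a : ℕ) : ℕ :=
  (((rGraphs n r).filter (IsLKFree n k L)) ×ˢ
      ((Finset.univ : Finset (Fin n)).powersetCard a)).sup
    (fun p => (Dset n r k L p.2 p.1).card)

set_option maxHeartbeats 1000000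

namespace DmaxRec

variable {m r k a : ℕ} {L : Finset ℕ}

/-- Restriction of a graph on `Fin (m+1)` to the vertex set avoiding `x`,
viewed as a graph on `Fin m` via `Fin.succAbove x`. -/
def resG (x : Fin (m + 1)) (G : Finset (Finset (Fin (m + 1)))) : Finset (Finset (Fin m)) :=
  Finset.univ.filter (fun w => w.map x.succAboveEmb ∈ G)

lemma mem_resG {x : Fin (m + 1)} {G : Finset (Finset (Fin (m + 1)))} {w : Finset (Fin m)} :
    w ∈ resG x G ↔ w.map x.succAboveEmb ∈ G := by
  simp [resG]

/-- Pull back a set of vertices of `Fin (m+1)` to `Fin m`. -/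
def pull (x : Fin (m + 1)) (e : Finset (Fin (m + 1))) : Finset (Fin m) :=
  Finset.univ.filter (fun j => x.succAbove j ∈ e)

lemma map_pull {x : Fin (m + 1)} {e : Finset (Fin (m + 1))} (hx : x ∉ e) :
    (pull x e).map x.succAboveEmb = e := by
  ext y
  simp only [pull, Finset.mem_map, Finset.mem_filter, Finset.mem_univ, true_and,
    Fin.succAboveEmb_apply]
  constructor
  · rintro ⟨j, hj, rfl⟩; exact hj
  · intro hy
    obtain ⟨j, rfl⟩ := Fin.exists_succAbove_eq (show y ≠ x from fun h => hx (h ▸ hy))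
    exact ⟨j, hy, rfl⟩

lemma count_res (x : Fin (m + 1)) (G : Finset (Finset (Fin (m + 1)))) (S : Finset (Fin m)) :
    ((resG x G).filter (fun e => e ⊆ S)).card
      = (G.filter (fun f => f ⊆ S.map x.succAboveEmb)).card := by
  apply Finset.card_bij (fun w _ => w.map x.succAboveEmb)
  · intro w hw
    rw [Finset.mem_filter] at hw ⊢
    exact ⟨mem_resG.1 hw.1, Finset.map_subset_map.2 hw.2⟩
  · intro w1 _ w2 _ h
    exact Finset.map_injective _ h
  · intro f hf
    rw [Finset.mem_filter] at hf
    obtain ⟨u, hu, rfl⟩ := Finset.subset_map_iff.1 hf.2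
    exact ⟨u, Finset.mem_filter.2 ⟨mem_resG.2 hf.1, hu⟩, rfl⟩

lemma resG_mem_family {x : Fin (m + 1)} {G : Finset (Finset (Fin (m + 1)))}
    (hG : G ∈ (rGraphs (m + 1) r).filter (IsLKFree (m + 1) k L)) :
    resG x G ∈ (rGraphs m r).filter (IsLKFree m k L) := by
  rw [Finset.mem_filter] at hG ⊢
  constructor
  · rw [rGraphs, Finset.mem_powerset]
    intro w hw
    have h1 := (Finset.mem_powerset.1 (by rw [rGraphs] at hG; exact hG.1)) (mem_resG.1 hw)
    rw [Finset.mem_powersetCard_univ] at h1 ⊢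
    rw [← Finset.card_map (f := x.succAboveEmb)]
    exact h1
  · intro S hS
    rw [count_res]
    exact hG.2 _ (by rw [Finset.card_map, hS])

lemma card_Dset_le (x : Fin (m + 1)) (A : Finset (Fin (m + 1))) (hA : A.card = a) (hx : x ∉ A)
    (H : Finset (Finset (Fin (m + 1))))
    (hH : H ∈ (rGraphs (m + 1) r).filter (IsLKFree (m + 1) k L)) :
    (Dset (m + 1) r k L A H).card ≤ dmax (m + 1) r k L (a + 1) * dmax m r k L a := by
  have himg : (Dset (m + 1) r k L A H).image (resG x)
      ⊆ Dset m r k L (pull x A) (resG x H) := by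
    intro w hw
    obtain ⟨G, hGmem, rfl⟩ := Finset.mem_image.1 hw
    rw [Dset, Finset.mem_filter] at hGmem ⊢
    refine ⟨resG_mem_family hGmem.1, ?_⟩
    intro e he j hj
    have hjA : x.succAbove j ∈ A := by simpa [pull] using hj
    have hemem : e.map x.succAboveEmb ∈ (G \ H) ∪ (H \ G) := by
      rcases Finset.mem_union.1 he with h | h <;>
        simp only [Finset.mem_sdiff, mem_resG] at h
      · exact Finset.mem_union_left _ (Finset.mem_sdiff.2 h)
      · exact Finset.mem_union_right _ (Finset.mem_sdiff.2 h)
    have h2 : x.succAboveEmb j ∈ e.map x.succAboveEmb := by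
      rw [Fin.succAboveEmb_apply]
      exact hGmem.2 _ hemem hjA
    exact (Finset.mem_map' _).1 h2
  have h1 : (Dset (m + 1) r k L A H).card
      ≤ dmax (m + 1) r k L (a + 1) * ((Dset (m + 1) r k L A H).image (resG x)).card := by
    apply Finset.card_le_mul_card_image
    intro w hw
    obtain ⟨Gs, hGs, hGsw⟩ := Finset.mem_image.1 hw
    have hGsD := Finset.mem_filter.1 hGs
    have hsub : (Dset (m + 1) r k L A H).filter (fun G => resG x G = w)
        ⊆ Dset (m + 1) r k L (insert x A) Gs := by
      intro G hG
      rw [Finset.mem_filter] at hG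
      have hGD := Finset.mem_filter.1 hG.1
      rw [Dset, Finset.mem_filter]
      refine ⟨(Finset.mem_filter.1 hG.1).1, ?_⟩
      · intro e he
        have hxe : x ∈ e := by
          by_contra hxe
          have hiff : e ∈ G ↔ e ∈ Gs := by
            have h' : (pull x e ∈ resG x G) ↔ (pull x e ∈ resG x Gs) := by
              rw [hG.2, hGsw]
            rwa [mem_resG, mem_resG, map_pull hxe] at h'
          rcases Finset.mem_union.1 he with h | h <;> rw [Finset.mem_sdiff] at h <;> tauto
        have heA : A ⊆ e := by
          rcases Finset.mem_union.1 he with h | h <;> rw [Finset.mem_sdiff] at h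
          · by_cases heH : e ∈ H
            · exact hGsD.2 e (Finset.mem_union_right _ (Finset.mem_sdiff.2 ⟨heH, h.2⟩))
            · exact hGD.2 e (Finset.mem_union_left _ (Finset.mem_sdiff.2 ⟨h.1, heH⟩))
          · by_cases heH : e ∈ H
            · exact hGD.2 e (Finset.mem_union_right _ (Finset.mem_sdiff.2 ⟨heH, h.2⟩))
            · exact hGsD.2 e (Finset.mem_union_left _ (Finset.mem_sdiff.2 ⟨h.1, heH⟩))
        exact Finset.insert_subset hxe heA
    calc ((Dset (m + 1) r k L A H).filter (fun G => resG x G = w)).card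
        ≤ (Dset (m + 1) r k L (insert x A) Gs).card := Finset.card_le_card hsub
      _ ≤ dmax (m + 1) r k L (a + 1) := by
          have hb : (Gs, insert x A) ∈ (((rGraphs (m + 1) r).filter (IsLKFree (m + 1) k L)) ×ˢ
              ((Finset.univ : Finset (Fin (m + 1))).powersetCard (a + 1))) := by
            rw [Finset.mem_product]
            refine ⟨hGsD.1, ?_⟩
            rw [Finset.mem_powersetCard_univ, Finset.card_insert_of_notMem hx, hA]
          rw [dmax]
          have hle := Finset.le_sup
            (f := fun p => (Dset (m + 1) r k L p.2 p.1).card) hb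
          exact hle
  have h2 : ((Dset (m + 1) r k L A H).image (resG x)).card ≤ dmax m r k L a := by
    calc ((Dset (m + 1) r k L A H).image (resG x)).card
        ≤ (Dset m r k L (pull x A) (resG x H)).card := Finset.card_le_card himg
      _ ≤ dmax m r k L a := by
          have hb : (resG x H, pull x A) ∈ (((rGraphs m r).filter (IsLKFree m k L)) ×ˢ
              ((Finset.univ : Finset (Fin m)).powersetCard a)) := by
            rw [Finset.mem_product]
            refine ⟨resG_mem_family hH, ?_⟩
            rw [Finset.mem_powersetCard_univ, ← Finset.card_map (f := x.succAboveEmb),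
              map_pull hx, hA]
          rw [dmax]
          have hle := Finset.le_sup
            (f := fun p => (Dset m r k L p.2 p.1).card) hb
          exact hle
  exact h1.trans (Nat.mul_le_mul_left _ h2)

lemma dmax_succ_le (ha : a < m + 1) :
    dmax (m + 1) r k L a ≤ dmax (m + 1) r k L (a + 1) * dmax m r k L a := by
  apply Finset.sup_le
  rintro ⟨H, A⟩ hp
  rw [Finset.mem_product] at hp
  have hA : A.card = a := Finset.mem_powersetCard_univ.1 hp.2
  have hne : A ≠ Finset.univ := by
    intro h
    rw [h, Finset.card_univ, Fintype.card_fin] at hA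
    omega
  obtain ⟨x, -, hx⟩ := Finset.exists_of_ssubset (Finset.ssubset_univ_iff.2 hne)
  exact card_Dset_le x A hA hx H hp.1

lemma dmax_le_one (h : m < r) : dmax m r k L a ≤ 1 := by
  apply Finset.sup_le
  rintro ⟨H, A⟩ -
  have hsub : Dset m r k L A H ⊆ {∅} := by
    intro G hG
    have hG1 : G ∈ rGraphs m r :=
      Finset.mem_of_mem_filter _ (Finset.mem_of_mem_filter _ hG)
    rw [rGraphs, Finset.mem_powerset] at hG1
    have hemp : (Finset.univ : Finset (Fin m)).powersetCard r = ∅ :=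
      Finset.powersetCard_eq_empty.2 (by simpa using h)
    rw [hemp, Finset.subset_empty] at hG1
    simp [hG1]
  simpa using Finset.card_le_card hsub

lemma dmax_prod (r k a : ℕ) (L : Finset ℕ) (ha : a < r - 1) :
    ∀ n, r ≤ n → dmax n r k L a ≤ ∏ v ∈ Finset.Icc r n, dmax v r k L (a + 1) := by
  intro n hn
  induction n, hn using Nat.le_induction with
  | base =>
    obtain ⟨m, rfl⟩ : ∃ m, r = m + 1 := ⟨r - 1, by omega⟩
    calc dmax (m + 1) (m + 1) k L a
        ≤ dmax (m + 1) (m + 1) k L (a + 1) * dmax m (m + 1) k L a :=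
          dmax_succ_le (by omega)
      _ ≤ dmax (m + 1) (m + 1) k L (a + 1) * 1 :=
          Nat.mul_le_mul_left _ (dmax_le_one (by omega))
      _ = ∏ v ∈ Finset.Icc (m + 1) (m + 1), dmax v (m + 1) k L (a + 1) := by
          rw [Finset.Icc_self, Finset.prod_singleton, Nat.mul_one]
  | succ n hn ih =>
    calc dmax (n + 1) r k L a
        ≤ dmax (n + 1) r k L (a + 1) * dmax n r k L a := dmax_succ_le (by omega)
      _ ≤ dmax (n + 1) r k L (a + 1) * ∏ v ∈ Finset.Icc r n, dmax v r k L (a + 1) :=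
          Nat.mul_le_mul_left _ ih
      _ = ∏ v ∈ Finset.Icc r (n + 1), dmax v r k L (a + 1) := by
          rw [Finset.prod_Icc_succ_top (by omega), Nat.mul_comm]

end DmaxRec

/-- Lemma: for `k > r`, `n > r - 1 > a` and any list `L ⊆ {0,…,C(k,r)}`,
`d(a,n) ≤ ∏_{v=r}^{n} d(a+1,v)`. -/
theorem dmax_recursion (n r k a : ℕ) (hk : r < k) (hn : r - 1 < n) (ha : a < r - 1)
    (L : Finset ℕ) (hL : L ⊆ Finset.range (Nat.choose k r + 1)) :
    dmax n r k L a ≤ ∏ v ∈ Finset.Icc r n, dmax v r k L (a + 1) := by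
  exact DmaxRec.dmax_prod r k a L ha n (by omega)
end

section
/- Let n, r, k be natural numbers with n ≥ r ≥ 2 and k > r, and let L ⊆ {0,1,…,C(k,r)} be a 3-good list. Then d(r−1, n) ≤ 2^{k}·n. -/
open Finset

/-- `L` is 3-good: the complement of `L` in `{0,…,C(k,r)}` contains no 3 consecutive integers. -/
def ThreeGood (k r : ℕ) (L : Finset ℕ) : Prop :=
  ∀ i : ℕ, i + 2 ≤ Nat.choose k r → ({i, i + 1, i + 2} : Finset ℕ) ∩ L ≠ ∅


section Abstract
variable {α : Type*} [DecidableEq α]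

def NoTriple (m : ℕ) (U : Finset α) (F : Finset (Finset α)) : Prop :=
  ∀ T ⊆ U, T.card = m → ∀ i : ℕ,
    ¬ (∃ N0 ∈ F, ∃ N1 ∈ F, ∃ N2 ∈ F,
        (N0 ∩ T).card = i ∧ (N1 ∩ T).card = i + 1 ∧ (N2 ∩ T).card = i + 2)

lemma inter_insert_not_mem (N T : Finset α) {a : α} (ha : a ∉ N) :
    N ∩ insert a T = N ∩ T := by
  ext z
  simp only [mem_inter, mem_insert]
  constructor
  · rintro ⟨hz, rfl | hz'⟩
    · exact absurd hz ha
    · exact ⟨hz, hz'⟩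
  · exact fun ⟨h1, h2⟩ => ⟨h1, Or.inr h2⟩

lemma card_inter_insert (N T : Finset α) (a : α) (haT : a ∉ T) :
    (N ∩ insert a T).card = (N ∩ T).card + (if a ∈ N then 1 else 0) := by
  rw [inter_comm, inter_comm N T]
  by_cases ha : a ∈ N
  · rw [insert_inter_of_mem ha, if_pos ha,
      card_insert_of_notMem (by simp [haT])]
  · rw [insert_inter_of_notMem ha, if_neg ha, add_zero]

lemma card_inter_erase (N T : Finset α) (b : α) :
    (N ∩ T.erase b).card + (if b ∈ N ∩ T then 1 else 0) = (N ∩ T).card := by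
  have h : N ∩ T.erase b = (N ∩ T).erase b := by
    ext z; simp only [mem_inter, mem_erase]; tauto
  rw [h]
  by_cases hb : b ∈ N ∩ T
  · rw [if_pos hb, card_erase_add_one hb]
  · rw [if_neg hb, erase_eq_of_notMem hb, add_zero]

lemma card_inter_swap (N T : Finset α) {a b : α} (haT : a ∉ T) (hbT : b ∈ T) :
    (N ∩ insert a (T.erase b)).card + (if b ∈ N then 1 else 0)
      = (N ∩ T).card + (if a ∈ N then 1 else 0) := by
  have haT' : a ∉ T.erase b := fun h => haT (mem_of_mem_erase h)
  rw [card_inter_insert N (T.erase b) a haT']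
  have h1 : (if b ∈ N ∩ T then 1 else 0) = (if b ∈ N then 1 else 0) := by
    simp [mem_inter, hbT]
  have h2 := card_inter_erase N T b
  omega

variable {m : ℕ} {U : Finset α} {F : Finset (Finset α)} {u : α}

lemma gap_lemma (hprop : NoTriple m U F) (hu : u ∈ U) (hm : 2 ≤ m)
    {N1 N2 : Finset α} (h1 : N1 ∈ F) (h1u : insert u N1 ∈ F)
    (h2 : N2 ∈ F) (h2u : insert u N2 ∈ F)
    (hu1 : u ∉ N1) (hu2 : u ∉ N2)
    {T' : Finset α} (hT' : T' ⊆ U.erase u) (hcT' : T'.card = m - 1) :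
    (N2 ∩ T').card ≠ (N1 ∩ T').card + 1 ∧ (N2 ∩ T').card ≠ (N1 ∩ T').card + 2 := by
  have huT' : u ∉ T' := fun h => (mem_erase.mp (hT' h)).1 rfl
  have hTsub : insert u T' ⊆ U := by
    intro z hz
    rcases mem_insert.mp hz with rfl | hz
    · exact hu
    · exact (mem_erase.mp (hT' hz)).2
  have hTc : (insert u T').card = m := by
    rw [card_insert_of_notMem huT', hcT']; omega
  have e1 : (N1 ∩ insert u T').card = (N1 ∩ T').card :=
    by rw [inter_insert_not_mem _ _ hu1]
  have e2 : (N2 ∩ insert u T').card = (N2 ∩ T').card :=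
    by rw [inter_insert_not_mem _ _ hu2]
  have e1u : ((insert u N1) ∩ insert u T').card = (N1 ∩ T').card + 1 := by
    rw [card_inter_insert _ _ u huT', if_pos (mem_insert_self u N1),
      insert_inter_of_notMem huT']
  have e2u : ((insert u N2) ∩ insert u T').card = (N2 ∩ T').card + 1 := by
    rw [card_inter_insert _ _ u huT', if_pos (mem_insert_self u N2),
      insert_inter_of_notMem huT']
  constructor
  · intro h
    exact hprop (insert u T') hTsub hTc ((N1 ∩ T').card)
      ⟨N1, h1, insert u N1, h1u, insert u N2, h2u, e1, e1u, by rw [e2u, h]⟩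
  · intro h
    exact hprop (insert u T') hTsub hTc ((N1 ∩ T').card)
      ⟨N1, h1, insert u N1, h1u, N2, h2, e1, e1u, by rw [e2, h]⟩

lemma walk_lemma (hprop : NoTriple m U F) (hu : u ∈ U) (hm : 2 ≤ m)
    {N1 N2 : Finset α} (h1 : N1 ∈ F) (h1u : insert u N1 ∈ F)
    (h2 : N2 ∈ F) (h2u : insert u N2 ∈ F)
    (hu1 : u ∉ N1) (hu2 : u ∉ N2) :
    ∀ (s : ℕ) (T Ts : Finset α), T ⊆ U.erase u → Ts ⊆ U.erase u →
      T.card = m - 1 → Ts.card = m - 1 → (Ts \ T).card = s →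
      (N2 ∩ T).card = (N1 ∩ T).card → (N2 ∩ Ts).card = (N1 ∩ Ts).card := by
  intro s
  induction s with
  | zero =>
    intro T Ts hT hTs hcT hcTs h0 hd
    have hsub : Ts ⊆ T := sdiff_eq_empty_iff_subset.mp (card_eq_zero.mp h0)
    have : Ts = T := eq_of_subset_of_card_le hsub (by omega)
    rw [this]; exact hd
  | succ s ih =>
    intro T Ts hT hTs hcT hcTs h0 hd
    have hne : (Ts \ T).Nonempty := card_pos.mp (by omega)
    obtain ⟨a, ha⟩ := hne
    have haTs : a ∈ Ts := (mem_sdiff.mp ha).1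
    have haT : a ∉ T := (mem_sdiff.mp ha).2
    have hTne : (T \ Ts).Nonempty := by
      rw [sdiff_nonempty]
      intro hsub
      have hEq : T = Ts := eq_of_subset_of_card_le hsub (by omega)
      rw [hEq, sdiff_self] at h0
      simp at h0
    obtain ⟨b, hb⟩ := hTne
    have hbT : b ∈ T := (mem_sdiff.mp hb).1
    have hbTs : b ∉ Ts := (mem_sdiff.mp hb).2
    set T1 := insert a (T.erase b) with hT1
    have haTb : a ∉ T.erase b := fun h => haT (mem_of_mem_erase h)
    have hT1sub : T1 ⊆ U.erase u :=
      insert_subset (hTs haTs) ((erase_subset b T).trans hT)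
    have hcT1 : T1.card = m - 1 := by
      have h3 : (T.erase b).card + 1 = T.card := card_erase_add_one hbT
      have h4 : T1.card = (T.erase b).card + 1 := card_insert_of_notMem haTb
      omega
    have k1 := card_inter_swap N1 T haT hbT
    have k2 := card_inter_swap N2 T haT hbT
    have g1 := gap_lemma hprop hu hm h1 h1u h2 h2u hu1 hu2 hT1sub hcT1
    have g2 := gap_lemma hprop hu hm h2 h2u h1 h1u hu2 hu1 hT1sub hcT1
    have hd1 : (N2 ∩ T1).card = (N1 ∩ T1).card := by
      rcases g1 with ⟨g11, g12⟩
      rcases g2 with ⟨g21, g22⟩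
      rw [← hT1] at k1 k2
      split_ifs at k1 k2 <;> omega
    have hTsT1 : Ts \ T1 = (Ts \ T).erase a := by
      ext z
      simp only [hT1, mem_sdiff, mem_erase, mem_insert, not_or, not_and]
      constructor
      · rintro ⟨hzTs, hza, hz2⟩
        refine ⟨hza, hzTs, fun hzT => ?_⟩
        rcases eq_or_ne z b with rfl | hzb
        · exact hbTs hzTs
        · exact (hz2 hzb hzT).elim
      · rintro ⟨hza, hzTs, hzT⟩
        exact ⟨hzTs, hza, fun _ h => hzT h⟩
    have hcount : (Ts \ T1).card = s := by
      rw [hTsT1]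
      have := card_erase_add_one (mem_sdiff.mpr ⟨haTs, haT⟩)
      omega
    exact ih T1 Ts hT1sub hTs hcT1 hcTs hcount hd1


lemma aux_allEq (hm : 2 ≤ m) (hU : m + 1 ≤ U.card) (hu : u ∈ U)
    {P Q : Finset α} (hsP : P ⊆ U.erase u) (hsQ : Q ⊆ U.erase u)
    (hEq : ∀ T' ⊆ U.erase u, T'.card = m - 1 → (P ∩ T').card = (Q ∩ T').card)
    {x : α} (hxQ : x ∈ Q) (hxP : x ∉ P) : False := by
  have hUc : (U.erase u).card + 1 = U.card := card_erase_add_one hu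
  by_cases hy : ∃ y, y ∈ P ∧ y ∉ Q
  · obtain ⟨y, hyP, hyQ⟩ := hy
    have hxy : x ≠ y := fun h => hxP (h ▸ hyP)
    have hxE : x ∈ U.erase u := hsQ hxQ
    have hyE : y ∈ U.erase u := hsP hyP
    have hc1 : ((U.erase u).erase x).card + 1 = (U.erase u).card := card_erase_add_one hxE
    have hc2 : (((U.erase u).erase x).erase y).card + 1 = ((U.erase u).erase x).card :=
      card_erase_add_one (mem_erase.mpr ⟨fun h => hxy h.symm, hyE⟩)
    obtain ⟨T'', hTsub, hTc⟩ := exists_subset_card_eq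
      (show m - 2 ≤ (((U.erase u).erase x).erase y).card by omega)
    have hxT : x ∉ T'' := fun h => (mem_erase.mp (mem_of_mem_erase (hTsub h))).1 rfl
    have hyT : y ∉ T'' := fun h => (mem_erase.mp (hTsub h)).1 rfl
    have hTsub' : T'' ⊆ U.erase u := hTsub.trans ((erase_subset _ _).trans (erase_subset _ _))
    have hx1 : insert x T'' ⊆ U.erase u := insert_subset hxE hTsub'
    have hy1 : insert y T'' ⊆ U.erase u := insert_subset hyE hTsub'
    have hcx : (insert x T'').card = m - 1 := by
      rw [card_insert_of_notMem hxT]; omega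
    have hcy : (insert y T'').card = m - 1 := by
      rw [card_insert_of_notMem hyT]; omega
    have ex := hEq (insert x T'') hx1 hcx
    have ey := hEq (insert y T'') hy1 hcy
    rw [card_inter_insert P T'' x hxT, card_inter_insert Q T'' x hxT,
      if_neg hxP, if_pos hxQ] at ex
    rw [card_inter_insert P T'' y hyT, card_inter_insert Q T'' y hyT,
      if_pos hyP, if_neg hyQ] at ey
    omega
  · push_neg at hy
    have hPQ : P ⊆ Q := hy
    have hxE : x ∈ U.erase u := hsQ hxQ
    have hc1 : ((U.erase u).erase x).card + 1 = (U.erase u).card := card_erase_add_one hxE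
    obtain ⟨T'', hTsub, hTc⟩ := exists_subset_card_eq
      (show m - 2 ≤ ((U.erase u).erase x).card by omega)
    have hxT : x ∉ T'' := fun h => (mem_erase.mp (hTsub h)).1 rfl
    have hTsub' : T'' ⊆ U.erase u := hTsub.trans (erase_subset _ _)
    have hx1 : insert x T'' ⊆ U.erase u := insert_subset hxE hTsub'
    have hcx : (insert x T'').card = m - 1 := by
      rw [card_insert_of_notMem hxT]; omega
    have ex := hEq (insert x T'') hx1 hcx
    rw [card_inter_insert P T'' x hxT, card_inter_insert Q T'' x hxT,
      if_neg hxP, if_pos hxQ] at ex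
    have hmono : (P ∩ T'').card ≤ (Q ∩ T'').card :=
      card_le_card (inter_subset_inter hPQ Subset.rfl)
    omega

lemma eq_of_allEq (hm : 2 ≤ m) (hU : m + 1 ≤ U.card) (hu : u ∈ U)
    {N1 N2 : Finset α} (hs1 : N1 ⊆ U.erase u) (hs2 : N2 ⊆ U.erase u)
    (hEq : ∀ T' ⊆ U.erase u, T'.card = m - 1 → (N1 ∩ T').card = (N2 ∩ T').card) :
    N1 = N2 := by
  by_contra hne
  have : ∃ x, (x ∈ N1 ∧ x ∉ N2) ∨ (x ∈ N2 ∧ x ∉ N1) := by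
    by_contra h
    push_neg at h
    apply hne
    ext z
    constructor
    · exact (h z).1
    · exact (h z).2
  obtain ⟨x, hx | hx⟩ := this
  · exact aux_allEq hm hU hu hs2 hs1 (fun T' h1 h2 => (hEq T' h1 h2).symm) hx.1 hx.2
  · exact aux_allEq hm hU hu hs1 hs2 hEq hx.1 hx.2

lemma P_card (hm : 2 ≤ m) (hU : m + 2 ≤ U.card) (hu : u ∈ U)
    (hsub : ∀ N ∈ F, N ⊆ U) (hprop : NoTriple m U F) :
    (F.filter (fun N => u ∉ N ∧ insert u N ∈ F)).card ≤ m := by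
  have hUc : (U.erase u).card + 1 = U.card := card_erase_add_one hu
  obtain ⟨T0, hT0sub, hT0c⟩ : ∃ T0 ⊆ U.erase u, T0.card = m - 1 :=
    exists_subset_card_eq (by omega)
  have := card_range m
  calc (F.filter (fun N => u ∉ N ∧ insert u N ∈ F)).card
      ≤ (range m).card := ?_
    _ = m := card_range m
  apply card_le_card_of_injOn (fun N => (N ∩ T0).card)
  · intro N _
    rw [mem_coe, mem_range]
    calc (N ∩ T0).card ≤ T0.card := card_le_card inter_subset_right
      _ = m - 1 := hT0c
      _ < m := by omega
  · intro N1 hN1 N2 hN2 hEq0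
    simp only [mem_coe, mem_filter] at hN1 hN2
    obtain ⟨hN1F, hu1, hN1u⟩ := hN1
    obtain ⟨hN2F, hu2, hN2u⟩ := hN2
    have hs1 : N1 ⊆ U.erase u := fun z hz =>
      mem_erase.mpr ⟨fun h => hu1 (h ▸ hz), hsub _ hN1F hz⟩
    have hs2 : N2 ⊆ U.erase u := fun z hz =>
      mem_erase.mpr ⟨fun h => hu2 (h ▸ hz), hsub _ hN2F hz⟩
    apply eq_of_allEq hm (by omega) hu hs1 hs2
    intro T' hT' hcT'
    exact (walk_lemma hprop hu hm hN1F hN1u hN2F hN2u hu1 hu2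
      ((T' \ T0).card) T0 T' hT0sub hT' hT0c hcT' rfl hEq0.symm).symm


lemma abstract_bound (m : ℕ) (hm : 2 ≤ m) :
    ∀ (c : ℕ) (U : Finset α) (F : Finset (Finset α)), U.card = c →
      (∀ N ∈ F, N ⊆ U) → NoTriple m U F → F.card ≤ 2 ^ (m + 1) + m * U.card := by
  intro c
  induction c using Nat.strong_induction_on with
  | _ c ih =>
    intro U F hUc hsub hprop
    by_cases hsmall : U.card ≤ m + 1
    · have h1 : F ⊆ U.powerset := fun N hN => mem_powerset.mpr (hsub N hN)
      have h2 : F.card ≤ 2 ^ U.card := by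
        calc F.card ≤ U.powerset.card := card_le_card h1
          _ = 2 ^ U.card := card_powerset U
      have h3 : (2:ℕ) ^ U.card ≤ 2 ^ (m+1) := Nat.pow_le_pow_right (by norm_num) hsmall
      omega
    · push_neg at hsmall
      have hUpos : 0 < U.card := by omega
      obtain ⟨u, hu⟩ := card_pos.mp hUpos
      have hU'c : (U.erase u).card + 1 = U.card := card_erase_add_one hu
      set F' := F.image (fun N => N.erase u) with hF'
      set A := F.filter (fun N => u ∈ N) with hA
      set B := F.filter (fun N => u ∉ N) with hB
      have hABcard : A.card + B.card = F.card :=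
        card_filter_add_card_filter_not (fun N => u ∈ N)
      have hBsub : B ⊆ F' := by
        intro N hN
        rw [hB, mem_filter] at hN
        rw [hF', mem_image]
        exact ⟨N, hN.1, erase_eq_of_notMem hN.2⟩
      have hAinj : Set.InjOn (fun N : Finset α => N.erase u) (A : Set (Finset α)) := by
        intro N1 h1 N2 h2 h
        have hu1 : u ∈ N1 := (mem_filter.mp (mem_coe.mp h1)).2
        have hu2 : u ∈ N2 := (mem_filter.mp (mem_coe.mp h2)).2
        calc N1 = insert u (N1.erase u) := (insert_erase hu1).symm
          _ = insert u (N2.erase u) := by rw [show N1.erase u = N2.erase u from h]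
          _ = N2 := insert_erase hu2
      have hAim : A.image (fun N => N.erase u) ⊆ F' :=
        image_subset_image (filter_subset _ _)
      have hcard2 : F.card ≤ F'.card + (A.image (fun N => N.erase u) ∩ B).card := by
        have h3 := card_union_add_card_inter (A.image (fun N => N.erase u)) B
        have h4 : (A.image (fun N => N.erase u) ∪ B) ⊆ F' := union_subset hAim hBsub
        have h5 : (A.image (fun N => N.erase u)).card = A.card := card_image_of_injOn hAinj
        have h6 := card_le_card h4
        omega
      have hPsub : A.image (fun N => N.erase u) ∩ B ⊆
          F.filter (fun N => u ∉ N ∧ insert u N ∈ F) := by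
        intro N hN
        rw [mem_inter] at hN
        obtain ⟨hN1, hN2⟩ := hN
        rw [mem_image] at hN1
        obtain ⟨M, hM, hMe⟩ := hN1
        rw [hA, mem_filter] at hM
        rw [hB, mem_filter] at hN2
        rw [mem_filter]
        refine ⟨hN2.1, hN2.2, ?_⟩
        rw [← hMe, insert_erase hM.2]
        exact hM.1
      have hP : (F.filter (fun N => u ∉ N ∧ insert u N ∈ F)).card ≤ m :=
        P_card hm (by omega) hu hsub hprop
      have hF'sub : ∀ N ∈ F', N ⊆ U.erase u := by
        intro N hN
        rw [hF', mem_image] at hN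
        obtain ⟨M, hM, rfl⟩ := hN
        exact erase_subset_erase u (hsub M hM)
      have hF'prop : NoTriple m (U.erase u) F' := by
        intro T hT hcT i htrip
        obtain ⟨M0, hM0, M1, hM1, M2, hM2, e0, e1, e2⟩ := htrip
        rw [hF', mem_image] at hM0 hM1 hM2
        obtain ⟨P0, hP0, rfl⟩ := hM0
        obtain ⟨P1, hP1, rfl⟩ := hM1
        obtain ⟨P2, hP2, rfl⟩ := hM2
        have huT : u ∉ T := fun h => (mem_erase.mp (hT h)).1 rfl
        have key : ∀ P : Finset α, (P.erase u ∩ T) = P ∩ T := by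
          intro P
          ext z
          simp only [mem_inter, mem_erase]
          constructor
          · rintro ⟨⟨_, hzP⟩, hzT⟩; exact ⟨hzP, hzT⟩
          · rintro ⟨hzP, hzT⟩; exact ⟨⟨fun h => huT (h ▸ hzT), hzP⟩, hzT⟩
        apply hprop T (hT.trans (erase_subset u U)) hcT i
        exact ⟨P0, hP0, P1, hP1, P2, hP2,
          by rw [← key P0]; exact e0,
          by rw [← key P1]; exact e1,
          by rw [← key P2]; exact e2⟩
      have hIH := ih (U.erase u).card (by omega) (U.erase u) F' rfl hF'sub hF'prop
      have hPle : (A.image (fun N => N.erase u) ∩ B).card ≤ m :=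
        le_trans (card_le_card hPsub) hP
      have harith : m * (U.erase u).card + m = m * U.card := by
        rw [← hU'c]; ring
      omega

end Abstract

/-- Lemma (link graph): for `n ≥ r ≥ 2`, `k > r` and a 3-good list `L ⊆ {0,…,C(k,r)}`,
`d(r-1, n) ≤ 2^k · n`. -/
theorem dmax_base (n r k : ℕ) (hr : 2 ≤ r) (hn : r ≤ n) (hk : r < k)
    (L : Finset ℕ) (hL : L ⊆ Finset.range (Nat.choose k r + 1))
    (hgood : ThreeGood k r L) :
    dmax n r k L (r - 1) ≤ 2 ^ k * n := by
  have hn2 : 2 ≤ n := le_trans hr hn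
  apply Finset.sup_le
  rintro ⟨H, A⟩ hp
  rw [mem_product] at hp
  obtain ⟨hH, hA⟩ := hp
  have hAcard : A.card = r - 1 := (mem_powersetCard.mp hA).2
  set m := k - r + 1 with hm
  have hm2 : 2 ≤ m := by omega
  set U : Finset (Fin n) := Finset.univ \ A with hU
  have hUcard : U.card = n - (r - 1) := by
    rw [hU, card_sdiff_of_subset (subset_univ A), card_univ, Fintype.card_fin, hAcard]
  set D := Dset n r k L A H with hD
  set link : Finset (Finset (Fin n)) → Finset (Fin n) :=
    fun G => U.filter (fun v => insert v A ∈ G) with hlink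
  have hDmem : ∀ G ∈ D,
      G ∈ rGraphs n r ∧ IsLKFree n k L G ∧ ∀ e ∈ (G \ H) ∪ (H \ G), A ⊆ e := by
    intro G hG
    rw [hD, Dset, mem_filter, mem_filter] at hG
    exact ⟨hG.1.1, hG.1.2, hG.2⟩
  have hedge : ∀ G ∈ D, ∀ e ∈ G, e.card = r := by
    intro G hG e he
    have h1 := (hDmem G hG).1
    rw [rGraphs, mem_powerset] at h1
    exact (mem_powersetCard.mp (h1 he)).2
  have hGH : ∀ G ∈ D, ∀ e : Finset (Fin n), ¬ A ⊆ e → (e ∈ G ↔ e ∈ H) := by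
    intro G hG e hAe
    have hsym := (hDmem G hG).2.2
    constructor
    · intro heG
      by_contra heH
      exact hAe (hsym e (mem_union_left _ (mem_sdiff.mpr ⟨heG, heH⟩)))
    · intro heH
      by_contra heG
      exact hAe (hsym e (mem_union_right _ (mem_sdiff.mpr ⟨heH, heG⟩)))
  have hshape : ∀ G ∈ D, ∀ e ∈ G, A ⊆ e → ∃ v, v ∈ U ∧ insert v A = e := by
    intro G hG e he hAe
    have hec := hedge G hG e he
    have h1 : (e \ A).card = 1 := by
      rw [card_sdiff_of_subset hAe, hec, hAcard]; omega
    obtain ⟨v, hv⟩ := card_eq_one.mp h1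
    have hvA : v ∈ e ∧ v ∉ A := mem_sdiff.mp (hv ▸ mem_singleton_self v)
    refine ⟨v, mem_sdiff.mpr ⟨mem_univ v, hvA.2⟩, ?_⟩
    apply eq_of_subset_of_card_le (insert_subset hvA.1 hAe)
    rw [card_insert_of_notMem hvA.2, hec, hAcard]
    omega
  have hrecon : ∀ G ∈ D, ∀ G' ∈ D, link G = link G' → G = G' := by
    intro G hG G' hG' hl
    ext e
    by_cases hAe : A ⊆ e
    · constructor
      · intro he
        obtain ⟨v, hvU, rfl⟩ := hshape G hG e he hAe
        have hv : v ∈ link G := mem_filter.mpr ⟨hvU, he⟩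
        rw [hl] at hv
        exact (mem_filter.mp hv).2
      · intro he
        obtain ⟨v, hvU, rfl⟩ := hshape G' hG' e he hAe
        have hv : v ∈ link G' := mem_filter.mpr ⟨hvU, he⟩
        rw [← hl] at hv
        exact (mem_filter.mp hv).2
    · rw [hGH G hG e hAe, ← hGH G' hG' e hAe]
  set NN := D.image link with hNN
  have hDcard : D.card = NN.card :=
    (card_image_of_injOn (fun G hG G' hG' =>
      hrecon G (mem_coe.mp hG) G' (mem_coe.mp hG'))).symm
  have hNNsub : ∀ N ∈ NN, N ⊆ U := by
    intro N hN
    rw [hNN, mem_image] at hN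
    obtain ⟨G, _, rfl⟩ := hN
    exact filter_subset _ _
  have hcount : ∀ T : Finset (Fin n), T ⊆ U → T.card = m →
      ∀ G ∈ D, (G.filter (fun e => e ⊆ A ∪ T)).card
        = ((H.filter (fun e => ¬ A ⊆ e)).filter (fun e => e ⊆ A ∪ T)).card
          + (link G ∩ T).card := by
    intro T hT hTc G hG
    have hsplit := card_filter_add_card_filter_not
      (s := G.filter (fun e => e ⊆ A ∪ T)) (p := fun e => A ⊆ e)
    have hX : (link G ∩ T).card
        = ((G.filter (fun e => e ⊆ A ∪ T)).filter (fun e => A ⊆ e)).card := by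
      apply card_bij (fun v _ => insert v A)
      · intro v hv
        rw [mem_inter] at hv
        obtain ⟨hv1, hv2⟩ := hv
        have hvG : insert v A ∈ G := (mem_filter.mp hv1).2
        rw [mem_filter, mem_filter]
        exact ⟨⟨hvG, insert_subset (mem_union_right A hv2) subset_union_left⟩,
          subset_insert v A⟩
      · intro v1 hv1 v2 hv2 h
        have hv1A : v1 ∉ A := (mem_sdiff.mp ((mem_filter.mp (mem_inter.mp hv1).1).1)).2
        have : v1 ∈ insert v2 A := h ▸ mem_insert_self v1 A
        rcases mem_insert.mp this with h' | h'
        · exact h'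
        · exact absurd h' hv1A
      · intro e he
        rw [mem_filter, mem_filter] at he
        obtain ⟨⟨heG, heS⟩, hAe⟩ := he
        obtain ⟨v, hvU, hveq⟩ := hshape G hG e heG hAe
        have hvA : v ∉ A := (mem_sdiff.mp hvU).2
        have hvT : v ∈ T := by
          have : v ∈ A ∪ T := heS (hveq ▸ mem_insert_self v A)
          rcases mem_union.mp this with h' | h'
          · exact absurd h' hvA
          · exact h'
        exact ⟨v, mem_inter.mpr ⟨mem_filter.mpr ⟨hvU, hveq ▸ heG⟩, hvT⟩, hveq⟩
    have hY : (G.filter (fun e => e ⊆ A ∪ T)).filter (fun e => ¬ A ⊆ e)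
        = (H.filter (fun e => ¬ A ⊆ e)).filter (fun e => e ⊆ A ∪ T) := by
      ext e
      simp only [mem_filter]
      constructor
      · rintro ⟨⟨heG, heS⟩, hAe⟩
        exact ⟨⟨(hGH G hG e hAe).mp heG, hAe⟩, heS⟩
      · rintro ⟨⟨heH, hAe⟩, heS⟩
        exact ⟨⟨(hGH G hG e hAe).mpr heH, heS⟩, hAe⟩
    rw [hY] at hsplit
    omega
  have hNTprop : NoTriple m U NN := by
    intro T hT hTc i htrip
    obtain ⟨N0, hN0, N1, hN1, N2, hN2, e0, e1, e2⟩ := htrip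
    rw [hNN, mem_image] at hN0 hN1 hN2
    obtain ⟨G0, hG0, rfl⟩ := hN0
    obtain ⟨G1, hG1, rfl⟩ := hN1
    obtain ⟨G2, hG2, rfl⟩ := hN2
    have hScard : (A ∪ T).card = k := by
      rw [card_union_of_disjoint (by
        rw [disjoint_left]
        intro a haA haT
        exact (mem_sdiff.mp (hT haT)).2 haA), hAcard, hTc]
      omega
    have k0 := hcount T hT hTc G0 hG0
    have k1 := hcount T hT hTc G1 hG1
    have k2 := hcount T hT hTc G2 hG2
    set c := ((H.filter (fun e => ¬ A ⊆ e)).filter (fun e => e ⊆ A ∪ T)).card with hc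
    have free : ∀ G ∈ D, (G.filter (fun e => e ⊆ A ∪ T)).card ∉ L :=
      fun G hG => (hDmem G hG).2.1 (A ∪ T) hScard
    have hub : (G2.filter (fun e => e ⊆ A ∪ T)).card ≤ Nat.choose k r := by
      have hsub2 : G2.filter (fun e => e ⊆ A ∪ T) ⊆ (A ∪ T).powersetCard r := by
        intro e he
        rw [mem_filter] at he
        exact mem_powersetCard.mpr ⟨he.2, hedge G2 hG2 e he.1⟩
      calc (G2.filter (fun e => e ⊆ A ∪ T)).card
          ≤ ((A ∪ T).powersetCard r).card := card_le_card hsub2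
        _ = Nat.choose k r := by rw [card_powersetCard, hScard]
    have hgood' := hgood (c + i) (by omega)
    obtain ⟨l, hl⟩ := nonempty_iff_ne_empty.mpr hgood'
    rw [mem_inter] at hl
    have hlL := hl.2
    have hlmem := hl.1
    rw [mem_insert, mem_insert, mem_singleton] at hlmem
    rcases hlmem with rfl | rfl | rfl
    · exact free G0 hG0 (by rw [k0, e0]; exact hlL)
    · exact free G1 hG1 (by rw [k1, e1]; exact hlL)
    · exact free G2 hG2 (by rw [k2, e2, ← add_assoc]; exact hlL)
  have habs := abstract_bound m hm2 U.card U NN rfl hNNsub hNTprop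
  have h1 : (2:ℕ) ^ (m+1) ≤ 2 ^ k := Nat.pow_le_pow_right (by norm_num) (by omega)
  have h2 : m * U.card ≤ 2 ^ (k-1) * n := by
    apply Nat.mul_le_mul
    · calc m ≤ k - 1 := by omega
        _ ≤ 2 ^ (k - 1) := le_of_lt Nat.lt_two_pow_self
    · calc U.card ≤ (Finset.univ : Finset (Fin n)).card := card_le_card (sdiff_subset)
        _ = n := by rw [card_univ, Fintype.card_fin]
  have h3 : (2:ℕ) ^ k + 2 ^ (k-1) * n ≤ 2 ^ k * n := by
    have hk1 : k - 1 + 1 = k := by omega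
    have hsp : (2:ℕ) ^ k = 2 ^ (k-1) * 2 := by rw [← pow_succ, hk1]
    have h4 : (2:ℕ) ^ k ≤ 2 ^ (k-1) * n := by
      rw [hsp]; exact Nat.mul_le_mul_left _ hn2
    have h5 : (2:ℕ) ^ (k-1) * n + 2 ^ (k-1) * n = 2 ^ k * n := by
      rw [hsp]; ring
    omega
  calc (Dset n r k L A H).card = NN.card := hDcard
    _ ≤ 2 ^ (m+1) + m * U.card := habs
    _ ≤ 2 ^ k + 2 ^ (k-1) * n := by omega
    _ ≤ 2 ^ k * n := h3
end

section
/- Let n, r, k be natural numbers with n ≥ r ≥ 2 and k > r, and let L ⊆ {0,1,…,C(k,r)} be a 3-good list. Then for every i ∈ {1,…,r−1}: d(r−i, n) ≤ 2^{k·n^{i−1} + n^{i−1}·log₂ n}. -/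
open Finset

/- ### Auxiliary machinery for the proof ### -/

section LemA
variable {V : Type*} [DecidableEq V]

/-- signed value of `Y` on probe `T`. -/
def sval (ε : V → ℤ) (Y T : Finset V) : ℤ := ∑ v ∈ Y ∩ T, ε v

lemma lemA (ε : V → ℤ) (hε : ∀ v, ε v = 1 ∨ ε v = -1) (q : ℕ) (hq : 2 ≤ q)
    (W : Finset V) : ∀ Y : Finset (Finset V),
      (∀ y ∈ Y, y ⊆ W) →
      (∀ T, T ⊆ W → T.card = q → ∀ c : ℤ,
        (∃ y ∈ Y, sval ε y T = c) → (∃ y ∈ Y, sval ε y T = c + 1) →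
        (∃ y ∈ Y, sval ε y T = c + 2) → False) →
      Y.card ≤ (W.card + 1) * 2 ^ q := by
  induction W using Finset.strongInductionOn with
  | _ W ih =>
  intro Y hsub hcond
  by_cases hwq : W.card ≤ q
  · have h1 : Y.card ≤ 2 ^ W.card := by
      calc Y.card ≤ W.powerset.card := card_le_card (fun y hy => mem_powerset.2 (hsub y hy))
        _ = 2 ^ W.card := card_powerset W
    have h2 : (2:ℕ) ^ W.card ≤ 2 ^ q := Nat.pow_le_pow_right (by norm_num) hwq
    have h3 : (1:ℕ) * 2 ^ q ≤ (W.card + 1) * 2 ^ q :=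
      Nat.mul_le_mul_right _ (by omega)
    omega
  · push_neg at hwq
    have hWne : W.Nonempty := card_pos.1 (by omega)
    obtain ⟨v, hv⟩ := hWne
    classical
    set Y' := Y.image (fun y => y.erase v) with hY'def
    set Yv := Y.filter (fun y => v ∉ y ∧ insert v y ∈ Y) with hYvdef
    -- card split
    have hsplit : Y.card ≤ Y'.card + Yv.card := by
      set A1 := Y.filter (fun y => v ∉ y) with hA1
      set A2 := Y.filter (fun y => ¬ v ∉ y) with hA2
      have hcards : A1.card + A2.card = Y.card :=
        card_filter_add_card_filter_not (fun y => v ∉ y)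
      set A2i := A2.image (fun y => y.erase v) with hA2i
      have hA2card : A2.card = A2i.card := by
        rw [hA2i, card_image_of_injOn]
        intro a ha b hb hab
        have hva : v ∈ a := by have := (mem_filter.1 ha).2; simpa using this
        have hvb : v ∈ b := by have := (mem_filter.1 hb).2; simpa using this
        have h2 : insert v (a.erase v) = insert v (b.erase v) := congrArg _ hab
        rwa [insert_erase hva, insert_erase hvb] at h2
      have hA1sub : A1 ⊆ Y' := by
        intro y hy
        have h1 := mem_filter.1 hy
        exact mem_image.2 ⟨y, h1.1, by rw [erase_eq_self.2 h1.2]⟩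
      have hA2isub : A2i ⊆ Y' := image_subset_image (filter_subset _ _)
      have hunion : (A1 ∪ A2i).card ≤ Y'.card := card_le_card (union_subset hA1sub hA2isub)
      have hinter : (A1 ∩ A2i) ⊆ Yv := by
        intro z hz
        have h1 := mem_inter.1 hz
        have h2 := mem_filter.1 h1.1
        obtain ⟨y, hy, hyz⟩ := mem_image.1 h1.2
        have hyY := (mem_filter.1 hy).1
        have hvy : v ∈ y := by have := (mem_filter.1 hy).2; simpa using this
        refine mem_filter.2 ⟨h2.1, h2.2, ?_⟩
        rw [← hyz, insert_erase hvy]; exact hyY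
      have hie : (A1 ∪ A2i).card + (A1 ∩ A2i).card = A1.card + A2i.card :=
        card_union_add_card_inter _ _
      have := card_le_card hinter
      omega
    -- bound Y'
    have hY'card : Y'.card ≤ W.card * 2 ^ q := by
      have hsub' : ∀ y ∈ Y', y ⊆ W.erase v := by
        intro y hy
        obtain ⟨z, hz, rfl⟩ := mem_image.1 hy
        exact (erase_subset_erase v (hsub z hz))
      have hcond' : ∀ T, T ⊆ W.erase v → T.card = q → ∀ c : ℤ,
          (∃ y ∈ Y', sval ε y T = c) → (∃ y ∈ Y', sval ε y T = c + 1) →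
          (∃ y ∈ Y', sval ε y T = c + 2) → False := by
        intro T hT hTcard c h0 h1 h2
        have hvT : v ∉ T := fun h => (mem_erase.1 (hT h)).1 rfl
        have lift : ∀ d : ℤ, (∃ y ∈ Y', sval ε y T = d) → ∃ y ∈ Y, sval ε y T = d := by
          rintro d ⟨y, hy, hval⟩
          obtain ⟨z, hz, rfl⟩ := mem_image.1 hy
          refine ⟨z, hz, ?_⟩
          rw [← hval]
          unfold sval
          congr 1
          ext a
          simp only [mem_inter, mem_erase]
          constructor
          · rintro ⟨h1, h2⟩; exact ⟨⟨fun hav => hvT (hav ▸ h2), h1⟩, h2⟩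
          · rintro ⟨⟨_, h1⟩, h2⟩; exact ⟨h1, h2⟩
        exact hcond T (hT.trans (erase_subset _ _)) hTcard c (lift _ h0) (lift _ h1) (lift _ h2)
      have := ih (W.erase v) (erase_ssubset hv) Y' hsub' hcond'
      rwa [card_erase_of_mem hv, Nat.sub_add_cancel (by omega : 1 ≤ W.card)] at this
    -- bound Yv
    have hYvcard : Yv.card ≤ 2 ^ q := by
      obtain ⟨T0', hT0'sub, hT0'card⟩ :=
        exists_subset_card_eq (s := W.erase v) (n := q - 1) (by rw [card_erase_of_mem hv]; omega)
      set T0 := insert v T0' with hT0def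
      have hvT0' : v ∉ T0' := fun h => (mem_erase.1 (hT0'sub h)).1 rfl
      have hT0card : T0.card = q := by
        rw [hT0def, card_insert_of_notMem hvT0', hT0'card]; omega
      have hT0W : T0 ⊆ W := insert_subset hv (hT0'sub.trans (erase_subset _ _))
      have hvT0 : v ∈ T0 := mem_insert_self _ _
      -- key: members of Yv with equal trace on T0 are equal
      have key : ∀ y ∈ Yv, ∀ y' ∈ Yv, y ∩ T0 = y' ∩ T0 → ∀ u, u ∈ y → u ∉ y' → False := by
        intro y hy y' hy' htr u huy huy'
        obtain ⟨hyY, hvy, hivy⟩ : y ∈ Y ∧ v ∉ y ∧ insert v y ∈ Y := by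
          have := mem_filter.1 hy; exact ⟨this.1, this.2.1, this.2.2⟩
        obtain ⟨hy'Y, hvy', hivy'⟩ : y' ∈ Y ∧ v ∉ y' ∧ insert v y' ∈ Y := by
          have := mem_filter.1 hy'; exact ⟨this.1, this.2.1, this.2.2⟩
        have huT0 : u ∉ T0 := by
          intro h
          have : u ∈ y' ∩ T0 := htr ▸ (mem_inter.2 ⟨huy, h⟩)
          exact huy' (mem_inter.1 this).1
        obtain ⟨x, hx⟩ : T0'.Nonempty := card_pos.1 (by omega)
        have hxT0 : x ∈ T0 := mem_insert_of_mem hx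
        have hxv : x ≠ v := fun h => hvT0' (h ▸ hx)
        set T := insert u (T0.erase x) with hTdef
        have huex : u ∉ T0.erase x := fun h => huT0 (mem_of_mem_erase h)
        have hTcard : T.card = q := by
          rw [hTdef, card_insert_of_notMem huex, card_erase_of_mem hxT0, hT0card]; omega
        have hTW : T ⊆ W := insert_subset (hsub y hyY huy)
          ((erase_subset _ _).trans hT0W)
        have hvT : v ∈ T := mem_insert_of_mem (mem_erase.2 ⟨fun h => hxv h.symm, hvT0⟩)
        have huv : u ≠ v := fun h => huT0 (h ▸ hvT0)
        -- traces agree on T0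
        have htr' : ∀ a, a ∈ T0 → (a ∈ y ↔ a ∈ y') := by
          intro a ha
          constructor
          · intro h; exact (mem_inter.1 (htr ▸ (mem_inter.2 ⟨h, ha⟩) : a ∈ y' ∩ T0)).1
          · intro h; exact (mem_inter.1 (htr.symm ▸ (mem_inter.2 ⟨h, ha⟩) : a ∈ y ∩ T0)).1
        have h1 : y ∩ T = insert u (y' ∩ T) := by
          ext a
          simp only [mem_inter, mem_insert, hTdef, mem_erase]
          constructor
          · rintro ⟨hay, (rfl | ⟨hax, haT0⟩)⟩
            · exact Or.inl rfl
            · exact Or.inr ⟨(htr' a haT0).1 hay, Or.inr ⟨hax, haT0⟩⟩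
          · rintro (rfl | ⟨hay', (rfl | ⟨hax, haT0⟩)⟩)
            · exact ⟨huy, Or.inl rfl⟩
            · exact absurd hay' huy'
            · exact ⟨(htr' a haT0).2 hay', Or.inr ⟨hax, haT0⟩⟩
        have huy'T : u ∉ y' ∩ T := fun h => huy' (mem_inter.1 h).1
        have hsumy : sval ε y T = ε u + sval ε y' T := by
          unfold sval; rw [h1, sum_insert huy'T]
        have hins : ∀ z : Finset V, v ∉ z → sval ε (insert v z) T = ε v + sval ε z T := by
          intro z hvz
          have : insert v z ∩ T = insert v (z ∩ T) := insert_inter_of_mem hvT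
          unfold sval
          rw [this, sum_insert (fun h => hvz (mem_inter.1 h).1)]
        set a := sval ε y' T with hadef
        have hsy : sval ε y T = a + ε u := by rw [hsumy]; ring
        have hsivy' : sval ε (insert v y') T = a + ε v := by rw [hins y' hvy']; ring
        have hsivy : sval ε (insert v y) T = a + ε u + ε v := by
          rw [hins y hvy, hsumy]; ring
        rcases hε u with hu | hu <;> rcases hε v with hv' | hv'
        · exact hcond T hTW hTcard a ⟨y', hy'Y, rfl⟩
            ⟨y, hyY, by rw [hsy, hu]⟩
            ⟨insert v y, hivy, by rw [hsivy, hu, hv']; ring⟩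
        · exact hcond T hTW hTcard (a - 1)
            ⟨insert v y', hivy', by rw [hsivy', hv']; ring⟩
            ⟨y', hy'Y, by ring⟩
            ⟨y, hyY, by rw [hsy, hu]; ring⟩
        · exact hcond T hTW hTcard (a - 1)
            ⟨y, hyY, by rw [hsy, hu]; ring⟩
            ⟨y', hy'Y, by ring⟩
            ⟨insert v y', hivy', by rw [hsivy', hv']; ring⟩
        · exact hcond T hTW hTcard (a - 2)
            ⟨insert v y, hivy, by rw [hsivy, hu, hv']; ring⟩
            ⟨y, hyY, by rw [hsy, hu]; ring⟩
            ⟨y', hy'Y, by ring⟩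
      have hinj : Set.InjOn (fun y => y ∩ T0) Yv := by
        intro y hy y' hy' h
        by_contra hne
        by_cases hss : y ⊆ y'
        · obtain ⟨u, hu1, hu2⟩ := exists_of_ssubset (ssubset_of_subset_of_ne hss hne)
          exact key y' hy' y hy h.symm u hu1 hu2
        · obtain ⟨u, hu1, hu2⟩ := not_subset.1 hss
          exact key y hy y' hy' h u hu1 hu2
      calc Yv.card ≤ T0.powerset.card :=
            card_le_card_of_injOn _ (fun y _ => mem_powerset.2 inter_subset_right) hinj
        _ = 2 ^ q := by rw [card_powerset, hT0card]
    calc Y.card ≤ Y'.card + Yv.card := hsplit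
      _ ≤ W.card * 2 ^ q + 2 ^ q := by omega
      _ = (W.card + 1) * 2 ^ q := by ring

end LemA

lemma chainCount {α β σ : Type*} [DecidableEq α] [DecidableEq σ] (M : ℕ) :
    ∀ (l : List β) (D : Finset α) (key : β → α → σ),
      (∀ G ∈ D, ∀ G' ∈ D, (∀ B ∈ l, key B G = key B G') → G = G') →
      (∀ (l₁ : List β) (B : β) (l₂ : List β), l = l₁ ++ B :: l₂ →
        ∀ G₀ ∈ D,
          ((D.filter (fun G => ∀ B' ∈ l₁, key B' G = key B' G₀)).image (key B)).card ≤ M) →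
      D.card ≤ M ^ l.length := by
  intro l
  induction l with
  | nil =>
    intro D key hinj _
    simp only [List.length_nil, pow_zero]
    exact card_le_one.2 (fun a ha b hb => hinj a ha b hb (by simp))
  | cons B l ih =>
    intro D key hinj hcond
    rcases D.eq_empty_or_nonempty with hD | ⟨G₀, hG₀⟩
    · simp [hD]
    · have himg : (D.image (key B)).card ≤ M := by
        have h := hcond [] B l rfl G₀ hG₀
        have : D.filter (fun G => ∀ B' ∈ ([] : List β), key B' G = key B' G₀) = D := by
          apply filter_true_of_mem; intro x _; simp
        rwa [this] at h
      have hfib : ∀ y ∈ D.image (key B),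
          (D.filter (fun G => key B G = y)).card ≤ M ^ l.length := by
        intro y _
        apply ih (D.filter (fun G => key B G = y)) key
        · intro G hG G' hG' hagree
          have h1 := mem_filter.1 hG
          have h2 := mem_filter.1 hG'
          refine hinj G h1.1 G' h2.1 ?_
          intro B' hB'
          rcases List.mem_cons.1 hB' with rfl | h
          · rw [h1.2, h2.2]
          · exact hagree B' h
        · intro l₁ B' l₂ hl G₁ hG₁
          have h1 := mem_filter.1 hG₁
          have heq : (D.filter (fun G => key B G = y)).filter
                (fun G => ∀ b ∈ l₁, key b G = key b G₁)
              = D.filter (fun G => ∀ b ∈ (B :: l₁), key b G = key b G₁) := by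
            ext G
            simp only [mem_filter, List.mem_cons]
            constructor
            · rintro ⟨⟨hGD, hky⟩, hall⟩
              refine ⟨hGD, ?_⟩
              rintro b (rfl | hb)
              · rw [hky, h1.2]
              · exact hall b hb
            · rintro ⟨hGD, hall⟩
              refine ⟨⟨hGD, ?_⟩, fun b hb => hall b (Or.inr hb)⟩
              rw [hall B (Or.inl rfl), h1.2]
          rw [heq]
          exact hcond (B :: l₁) B' l₂ (by rw [hl]; rfl) G₁ h1.1
      calc D.card ≤ M ^ l.length * (D.image (key B)).card :=
            card_le_mul_card_image _ _ hfib
        _ ≤ M ^ l.length * M := Nat.mul_le_mul_left _ himg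
        _ = M ^ (B :: l).length := by rw [List.length_cons, pow_succ]

def mu {n : ℕ} (B : Finset (Fin n)) : ℕ := if h : B.Nonempty then (B.min' h).val else 0

def keyF {n : ℕ} (A : Finset (Fin n)) (H : Finset (Finset (Fin n)))
    (B : Finset (Fin n)) (G : Finset (Finset (Fin n))) : Finset (Fin n) :=
  univ.filter (fun v => (v ∉ A ∧ ∀ b ∈ B, v < b) ∧ (A ∪ insert v B) ∈ ((G \ H) ∪ (H \ G)))

lemma mem_Dset_iff {n r k : ℕ} {L : Finset ℕ} {A : Finset (Fin n)}
    {H G : Finset (Finset (Fin n))} :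
    G ∈ Dset n r k L A H ↔ (G ⊆ univ.powersetCard r ∧ IsLKFree n k L G ∧
      ∀ e ∈ (G \ H ∪ H \ G), A ⊆ e) := by
  unfold Dset rGraphs
  simp only [mem_filter, mem_powerset]
  tauto

lemma diff_edge_card {n r : ℕ} {G H : Finset (Finset (Fin n))}
    (hG : G ⊆ univ.powersetCard r) (hH : H ⊆ univ.powersetCard r)
    {e : Finset (Fin n)} (he : e ∈ (G \ H ∪ H \ G)) : e.card = r := by
  rcases mem_union.1 he with h | h
  · exact (mem_powersetCard.1 (hG (mem_sdiff.1 h).1)).2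
  · exact (mem_powersetCard.1 (hH (mem_sdiff.1 h).1)).2

lemma perCoord {n r k i : ℕ} {L : Finset ℕ} {A : Finset (Fin n)} {H : Finset (Finset (Fin n))}
    (hr : 2 ≤ r) (hn : r ≤ n) (hk : r < k) (hgood : ThreeGood k r L)
    (hi1 : 1 ≤ i) (hi2 : i ≤ r - 1) (hA : A.card = r - i)
    (hH : H ⊆ univ.powersetCard r)
    (B : Finset (Fin n)) (hB : B.card = i - 1) (l₁ : List (Finset (Fin n)))
    (hpre : ∀ B'' : Finset (Fin n), B''.card = i - 1 → mu B'' < mu B → B'' ∈ l₁)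
    (G₀ : Finset (Finset (Fin n))) (hG₀ : G₀ ∈ Dset n r k L A H) :
    (((Dset n r k L A H).filter
        (fun G => ∀ B' ∈ l₁, keyF A H B' G = keyF A H B' G₀)).image (keyF A H B)).card
      ≤ n * 2 ^ k := by
  classical
  set D := Dset n r k L A H with hDdef
  set E := D.filter (fun G => ∀ B' ∈ l₁, keyF A H B' G = keyF A H B' G₀) with hEdef
  have hED : E ⊆ D := filter_subset _ _
  have hDmem : ∀ G ∈ D, G ⊆ univ.powersetCard r ∧ IsLKFree n k L G ∧
      ∀ e ∈ (G \ H ∪ H \ G), A ⊆ e := fun G hG => mem_Dset_iff.1 hG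
  by_cases hAB : Disjoint A B
  case neg =>
    have hkey : ∀ G ∈ D, keyF A H B G = ∅ := by
      intro G hGD
      rw [eq_empty_iff_forall_notMem]
      intro v hv
      obtain ⟨x, hxA, hxB⟩ := not_disjoint_iff.1 hAB
      have hmem := (mem_filter.1 hv).2.2
      have hcard := diff_edge_card (hDmem G hGD).1 hH hmem
      have h1 : (A ∪ insert v B).card + (A ∩ insert v B).card = A.card + (insert v B).card :=
        card_union_add_card_inter _ _
      have h2 : 1 ≤ (A ∩ insert v B).card :=
        card_pos.2 ⟨x, mem_inter.2 ⟨hxA, mem_insert_of_mem hxB⟩⟩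
      have h3 : (insert v B).card ≤ B.card + 1 := card_insert_le _ _
      omega
    have himg : E.image (keyF A H B) ⊆ {∅} := by
      intro y hy
      obtain ⟨G, hGE, rfl⟩ := mem_image.1 hy
      exact mem_singleton.2 (hkey G (hED hGE))
    calc (E.image (keyF A H B)).card ≤ ({∅} : Finset (Finset (Fin n))).card :=
          card_le_card himg
      _ = 1 := rfl
      _ ≤ n * 2 ^ k := by
          have hn0 : 0 < n := by omega
          have h2 : 0 < 2 ^ k := by positivity
          calc 1 ≤ n := hn0
            _ = n * 1 := (mul_one n).symm
            _ ≤ n * 2 ^ k := Nat.mul_le_mul_left _ h2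
  case pos =>
    set q := k - r + 1 with hqdef
    set W := univ.filter (fun v : Fin n => v ∉ A ∧ ∀ b ∈ B, v < b) with hWdef
    set ε : Fin n → ℤ := fun v => if (A ∪ insert v B) ∈ H then -1 else 1 with hεdef
    have hεpm : ∀ v, ε v = 1 ∨ ε v = -1 := by
      intro v
      simp only [hεdef]
      by_cases h : (A ∪ insert v B) ∈ H
      · exact Or.inr (if_pos h)
      · exact Or.inl (if_neg h)
    have hYsub : ∀ y ∈ E.image (keyF A H B), y ⊆ W := by
      intro y hy
      obtain ⟨G, _, rfl⟩ := mem_image.1 hy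
      intro v hv
      exact mem_filter.2 ⟨mem_univ _, (mem_filter.1 hv).2.1⟩
    have hG₀E : G₀ ∈ E := mem_filter.2 ⟨hG₀, fun _ _ => rfl⟩
    have hcondmain : ∀ T, T ⊆ W → T.card = q → ∀ c : ℤ,
        (∃ y ∈ E.image (keyF A H B), sval ε y T = c) →
        (∃ y ∈ E.image (keyF A H B), sval ε y T = c + 1) →
        (∃ y ∈ E.image (keyF A H B), sval ε y T = c + 2) → False := by
      intro T hTW hTcard c h0 h1 h2
      have hTfacts : ∀ v ∈ T, v ∉ A ∧ ∀ b ∈ B, v < b := fun v hv => (mem_filter.1 (hTW hv)).2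
      set S := A ∪ B ∪ T with hSdef
      have hdT : Disjoint (A ∪ B) T := by
        rw [disjoint_union_left]
        constructor
        · exact disjoint_right.2 (fun v hvT hvA => (hTfacts v hvT).1 hvA)
        · exact disjoint_right.2 (fun v hvT hvB => lt_irrefl v ((hTfacts v hvT).2 v hvB))
      have hScard : S.card = k := by
        rw [hSdef, card_union_of_disjoint hdT, card_union_of_disjoint hAB, hA, hB, hTcard]
        omega
      set sgn : Finset (Fin n) → ℤ := fun e => if e ∈ H then -1 else 1 with hsgn
      -- claim 1 : edge count identity
      have hm : ∀ G : Finset (Finset (Fin n)),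
          ((G.filter (· ⊆ S)).card : ℤ)
            = ((H.filter (· ⊆ S)).card : ℤ) + ∑ e ∈ ((G \ H) ∪ (H \ G)).filter (· ⊆ S), sgn e := by
        intro G
        have hGsplit : G.filter (· ⊆ S) = ((G \ H).filter (· ⊆ S)) ∪ ((G ∩ H).filter (· ⊆ S)) := by
          rw [← filter_union, sdiff_union_inter]
        have hHsplit : H.filter (· ⊆ S) = ((H \ G).filter (· ⊆ S)) ∪ ((G ∩ H).filter (· ⊆ S)) := by
          rw [← filter_union]
          congr 1
          rw [inter_comm]
          exact (sdiff_union_inter H G).symm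
        have hd1 : Disjoint ((G \ H).filter (· ⊆ S)) ((G ∩ H).filter (· ⊆ S)) :=
          disjoint_filter_filter (disjoint_left.2 (fun x h1 h2 => (mem_sdiff.1 h1).2 (mem_inter.1 h2).2))
        have hd2 : Disjoint ((H \ G).filter (· ⊆ S)) ((G ∩ H).filter (· ⊆ S)) :=
          disjoint_filter_filter (disjoint_left.2 (fun x h1 h2 => (mem_sdiff.1 h1).2 (mem_inter.1 h2).1))
        have hd3 : Disjoint ((G \ H).filter (· ⊆ S)) ((H \ G).filter (· ⊆ S)) :=
          disjoint_filter_filter disjoint_sdiff_sdiff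
        have e1 : ∀ e ∈ (G \ H).filter (· ⊆ S), sgn e = 1 := by
          intro e he
          have h := mem_sdiff.1 (mem_filter.1 he).1
          simp [hsgn, h.2]
        have e2 : ∀ e ∈ (H \ G).filter (· ⊆ S), sgn e = -1 := by
          intro e he
          have h := mem_sdiff.1 (mem_filter.1 he).1
          simp [hsgn, h.1]
        have hsum : ∑ e ∈ ((G \ H) ∪ (H \ G)).filter (· ⊆ S), sgn e
            = (((G \ H).filter (· ⊆ S)).card : ℤ) - (((H \ G).filter (· ⊆ S)).card : ℤ) := by
          rw [filter_union, sum_union hd3, sum_congr rfl e1, sum_congr rfl e2]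
          simp [sub_eq_add_neg]
        rw [hGsplit, hHsplit, card_union_of_disjoint hd1, card_union_of_disjoint hd2, hsum]
        push_cast
        ring
      -- claim 2 : current-coordinate sum
      have hcur : ∀ G : Finset (Finset (Fin n)),
          ∑ e ∈ (((G \ H) ∪ (H \ G)).filter (· ⊆ S)).filter
              (fun e => ∃ v ∈ T, e = A ∪ insert v B), sgn e
            = sval ε (keyF A H B G) T := by
        intro G
        have himg : (((G \ H) ∪ (H \ G)).filter (· ⊆ S)).filter
              (fun e => ∃ v ∈ T, e = A ∪ insert v B)
            = (keyF A H B G ∩ T).image (fun v => A ∪ insert v B) := by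
          ext e
          constructor
          · intro he
            obtain ⟨he1, v, hvT, rfl⟩ := mem_filter.1 he
            have hdiffe := (mem_filter.1 he1).1
            refine mem_image.2 ⟨v, mem_inter.2 ⟨?_, hvT⟩, rfl⟩
            exact mem_filter.2 ⟨mem_univ _, ⟨⟨(hTfacts v hvT).1, (hTfacts v hvT).2⟩, hdiffe⟩⟩
          · intro he
            obtain ⟨v, hv, rfl⟩ := mem_image.1 he
            obtain ⟨hvk, hvT⟩ := mem_inter.1 hv
            have hk1 := (mem_filter.1 hvk).2
            refine mem_filter.2 ⟨mem_filter.2 ⟨hk1.2, ?_⟩, ⟨v, hvT, rfl⟩⟩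
            intro a ha
            rcases mem_union.1 ha with h | h
            · exact mem_union_left _ (mem_union_left _ h)
            · rcases mem_insert.1 h with rfl | h'
              · exact mem_union_right _ hvT
              · exact mem_union_left _ (mem_union_right _ h')
        have hinj : ∀ x ∈ keyF A H B G ∩ T, ∀ y ∈ keyF A H B G ∩ T,
            A ∪ insert x B = A ∪ insert y B → x = y := by
          intro x hx y hy hxy
          have hxk := (mem_filter.1 (mem_inter.1 hx).1).2
          have : x ∈ A ∪ insert y B := hxy ▸ (mem_union_right _ (mem_insert_self _ _))
          rcases mem_union.1 this with h | h
          · exact absurd h hxk.1.1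
          · rcases mem_insert.1 h with h' | h'
            · exact h'
            · exact absurd (hxk.1.2 x h') (lt_irrefl x)
        rw [himg, sum_image hinj]
        unfold sval
        exact sum_congr rfl (fun v _ => rfl)
      -- claim 3 : prefix part is invariant on E
      have hpreinv : ∀ G ∈ E, ∀ G' ∈ E,
          (((G \ H) ∪ (H \ G)).filter (· ⊆ S)).filter (fun e => ¬ ∃ v ∈ T, e = A ∪ insert v B)
          ⊆ (((G' \ H) ∪ (H \ G')).filter (· ⊆ S)).filter
              (fun e => ¬ ∃ v ∈ T, e = A ∪ insert v B) := by
        intro G hGE G' hG'E e he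
        have hGD : G ∈ D := hED hGE
        obtain ⟨he1, hnex⟩ := mem_filter.1 he
        obtain ⟨hdiffe, heS⟩ := mem_filter.1 he1
        have hAe : A ⊆ e := (hDmem G hGD).2.2 e hdiffe
        have her : e.card = r := diff_edge_card (hDmem G hGD).1 hH hdiffe
        set C := e \ A with hC
        have hCcard : C.card = i := by
          rw [hC, card_sdiff_of_subset hAe, her, hA]; omega
        have hCne : C.Nonempty := card_pos.1 (by omega)
        have hCBT : C ⊆ B ∪ T := by
          intro a ha
          obtain ⟨hae, haA⟩ := mem_sdiff.1 ha
          rcases mem_union.1 (heS hae) with h | h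
          · rcases mem_union.1 h with h' | h'
            · exact absurd h' haA
            · exact mem_union_left _ h'
          · exact mem_union_right _ h
        have hCT : (C ∩ T).Nonempty := by
          rw [nonempty_iff_ne_empty]
          intro hemp
          have hCB : C ⊆ B := by
            intro a ha
            rcases mem_union.1 (hCBT ha) with h | h
            · exact h
            · exact absurd (mem_inter.2 ⟨ha, h⟩) (by rw [hemp]; exact notMem_empty a)
          have := card_le_card hCB
          omega
        set v0 := C.min' hCne with hv0
        have hv0C : v0 ∈ C := min'_mem _ _
        have hv0T : v0 ∈ T := by
          rcases mem_union.1 (hCBT hv0C) with h | h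
          · obtain ⟨t, ht⟩ := hCT
            obtain ⟨htC, htT⟩ := mem_inter.1 ht
            exact absurd ((hTfacts t htT).2 v0 h) (not_lt.2 (min'_le _ _ htC))
          · exact h
        set B2 := C.erase v0 with hB2
        have hB2card : B2.card = i - 1 := by rw [hB2, card_erase_of_mem hv0C, hCcard]
        have hrecover : A ∪ insert v0 B2 = e := by
          rw [hB2, insert_erase hv0C, hC, union_sdiff_of_subset hAe]
        have hBne : B2 ≠ B := fun hbb => hnex ⟨v0, hv0T, by rw [← hrecover, hbb]⟩
        have hi2' : 1 ≤ i - 1 := by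
          by_contra hcon
          have h0 : i - 1 = 0 := by omega
          exact hBne (by rw [card_eq_zero.1 (hB2card.trans h0), card_eq_zero.1 (hB.trans h0)])
        have hB2ne : B2.Nonempty := card_pos.1 (by omega)
        have hBneN : B.Nonempty := card_pos.1 (by omega)
        obtain ⟨y, hy⟩ : (B2 \ B).Nonempty := by
          rw [nonempty_iff_ne_empty]
          intro h
          exact hBne (eq_of_subset_of_card_le (sdiff_eq_empty_iff_subset.1 h) (by omega))
        obtain ⟨hyB2, hyB⟩ := mem_sdiff.1 hy
        have hyT : y ∈ T := by
          rcases mem_union.1 (hCBT (erase_subset _ _ hyB2)) with h | h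
          · exact absurd h hyB
          · exact h
        have hmu : mu B2 < mu B := by
          unfold mu
          rw [dif_pos hB2ne, dif_pos hBneN]
          have h1 : B2.min' hB2ne ≤ y := min'_le _ _ hyB2
          have h2 : y < B.min' hBneN := (hTfacts y hyT).2 _ (min'_mem _ _)
          exact Fin.lt_def.1 (lt_of_le_of_lt h1 h2)
        have hkeyG : keyF A H B2 G = keyF A H B2 G₀ :=
          (mem_filter.1 hGE).2 B2 (hpre B2 hB2card hmu)
        have hkeyG' : keyF A H B2 G' = keyF A H B2 G₀ :=
          (mem_filter.1 hG'E).2 B2 (hpre B2 hB2card hmu)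
        have hv0key : v0 ∈ keyF A H B2 G := by
          refine mem_filter.2 ⟨mem_univ _, ⟨⟨(mem_sdiff.1 hv0C).2, ?_⟩, ?_⟩⟩
          · intro b hb
            obtain ⟨hbne, hbC⟩ := mem_erase.1 hb
            exact lt_of_le_of_ne (min'_le _ _ hbC) (Ne.symm hbne)
          · rw [hrecover]; exact hdiffe
        have hv0key' : v0 ∈ keyF A H B2 G' := by
          rw [hkeyG']; rw [hkeyG] at hv0key; exact hv0key
        have hdiff' : e ∈ (G' \ H ∪ H \ G') := by
          have h := (mem_filter.1 hv0key').2.2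
          rwa [hrecover] at h
        exact mem_filter.2 ⟨mem_filter.2 ⟨hdiff', heS⟩, hnex⟩
      -- the invariant
      have hconst : ∀ G ∈ E, ((G.filter (· ⊆ S)).card : ℤ) - sval ε (keyF A H B G) T
          = ((G₀.filter (· ⊆ S)).card : ℤ) - sval ε (keyF A H B G₀) T := by
        intro G hGE
        have hpreq : (((G \ H) ∪ (H \ G)).filter (· ⊆ S)).filter
              (fun e => ¬ ∃ v ∈ T, e = A ∪ insert v B)
            = (((G₀ \ H) ∪ (H \ G₀)).filter (· ⊆ S)).filter
              (fun e => ¬ ∃ v ∈ T, e = A ∪ insert v B) :=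
          subset_antisymm (hpreinv G hGE G₀ hG₀E) (hpreinv G₀ hG₀E G hGE)
        have hsp : ∀ G1 : Finset (Finset (Fin n)),
            ∑ e ∈ ((G1 \ H) ∪ (H \ G1)).filter (· ⊆ S), sgn e
            = (∑ e ∈ (((G1 \ H) ∪ (H \ G1)).filter (· ⊆ S)).filter
                (fun e => ∃ v ∈ T, e = A ∪ insert v B), sgn e)
            + ∑ e ∈ (((G1 \ H) ∪ (H \ G1)).filter (· ⊆ S)).filter
                (fun e => ¬ ∃ v ∈ T, e = A ∪ insert v B), sgn e :=
          fun G1 => (sum_filter_add_sum_filter_not _ _ _).symm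
        rw [hm G, hm G₀, hsp G, hsp G₀, hcur G, hcur G₀, hpreq]
        ring
      -- extract the three graphs and conclude
      obtain ⟨ya, hya, hsa⟩ := h0
      obtain ⟨Ga, hGaE, rfl⟩ := mem_image.1 hya
      obtain ⟨yb, hyb, hsb⟩ := h1
      obtain ⟨Gb, hGbE, rfl⟩ := mem_image.1 hyb
      obtain ⟨yc, hyc, hsc⟩ := h2
      obtain ⟨Gc, hGcE, rfl⟩ := mem_image.1 hyc
      set ma := (Ga.filter (· ⊆ S)).card with hmadef
      set mb := (Gb.filter (· ⊆ S)).card with hmbdef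
      set mc := (Gc.filter (· ⊆ S)).card with hmcdef
      have hca := hconst Ga hGaE
      have hcb := hconst Gb hGbE
      have hcc := hconst Gc hGcE
      rw [hsa] at hca
      rw [hsb] at hcb
      rw [hsc] at hcc
      have hnb : mb = ma + 1 := by
        have : (mb : ℤ) = (ma : ℤ) + 1 := by
          rw [hmadef, hmbdef]; omega
        exact_mod_cast this
      have hnc : mc = ma + 2 := by
        have : (mc : ℤ) = (ma : ℤ) + 2 := by
          rw [hmadef, hmcdef]; omega
        exact_mod_cast this
      have hsubp : Gc.filter (· ⊆ S) ⊆ S.powersetCard r := by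
        intro e he'
        have h1 := mem_filter.1 he'
        exact mem_powersetCard.2 ⟨h1.2, (mem_powersetCard.1 ((hDmem Gc (hED hGcE)).1 h1.1)).2⟩
      have hmcle : mc ≤ k.choose r := by
        calc mc ≤ (S.powersetCard r).card := card_le_card hsubp
          _ = k.choose r := by rw [card_powersetCard, hScard]
      have hgd := hgood ma (by omega)
      obtain ⟨t, ht⟩ := nonempty_iff_ne_empty.2 hgd
      have htL := (mem_inter.1 ht).2
      have htm := (mem_inter.1 ht).1
      have hfa : ma ∉ L := ((hDmem Ga (hED hGaE)).2.1) S hScard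
      have hfb : mb ∉ L := ((hDmem Gb (hED hGbE)).2.1) S hScard
      have hfc : mc ∉ L := ((hDmem Gc (hED hGcE)).2.1) S hScard
      simp only [mem_insert, mem_singleton] at htm
      rcases htm with rfl | rfl | rfl
      · exact hfa htL
      · exact hfb (by rw [hnb]; exact htL)
      · exact hfc (by rw [hnc]; exact htL)
    -- final arithmetic
    have hAne : A.Nonempty := card_pos.1 (by omega)
    obtain ⟨a0, ha0⟩ := hAne
    have hWcard : W.card + 1 ≤ n := by
      have hsub0 : W ⊆ univ.erase a0 := by
        intro v hv
        exact mem_erase.2 ⟨fun h => (mem_filter.1 hv).2.1 (h ▸ ha0), mem_univ _⟩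
      have h := card_le_card hsub0
      rw [card_erase_of_mem (mem_univ _), card_univ, Fintype.card_fin] at h
      omega
    have hfinal : (W.card + 1) * 2 ^ q ≤ n * 2 ^ k :=
      Nat.mul_le_mul hWcard (Nat.pow_le_pow_right (by norm_num) (by omega))
    exact le_trans (lemA ε hεpm q (by omega) W _ hYsub hcondmain) hfinal

set_option maxHeartbeats 2000000 in
lemma DsetBound {n r k i : ℕ} {L : Finset ℕ} {A : Finset (Fin n)} {H : Finset (Finset (Fin n))}
    (hr : 2 ≤ r) (hn : r ≤ n) (hk : r < k) (hgood : ThreeGood k r L)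
    (hi1 : 1 ≤ i) (hi2 : i ≤ r - 1) (hA : A.card = r - i)
    (hH : H ⊆ univ.powersetCard r) :
    (Dset n r k L A H).card ≤ (n * 2 ^ k) ^ (n ^ (i - 1)) := by
  classical
  set l := (((univ : Finset (Fin n)).powersetCard (i - 1)).toList).mergeSort
      (fun B B' => decide (mu B ≤ mu B')) with hldef
  have hmem : ∀ B : Finset (Fin n), B.card = i - 1 → B ∈ l := by
    intro B hB
    rw [hldef, List.mem_mergeSort, Finset.mem_toList]
    exact mem_powersetCard.2 ⟨subset_univ _, hB⟩
  have hmem' : ∀ B ∈ l, B.card = i - 1 := by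
    intro B hB
    rw [hldef, List.mem_mergeSort, Finset.mem_toList] at hB
    exact (mem_powersetCard.1 hB).2
  have hsorted : l.Pairwise (fun B B' => decide (mu B ≤ mu B') = true) := by
    apply List.pairwise_mergeSort
    · intro a b c h1 h2
      simp only [decide_eq_true_eq] at h1 h2 ⊢
      omega
    · intro a b
      simp only [Bool.or_eq_true, decide_eq_true_eq]
      omega
  have hrec : ∀ G ∈ Dset n r k L A H, ∀ e ∈ (G \ H ∪ H \ G),
      ∃ B : Finset (Fin n), B.card = i - 1 ∧ ∃ v, v ∈ keyF A H B G ∧ e = A ∪ insert v B := by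
    intro G hGD e he
    have hmemD := mem_Dset_iff.1 hGD
    have hAe : A ⊆ e := hmemD.2.2 e he
    have her : e.card = r := diff_edge_card hmemD.1 hH he
    have hCcard : (e \ A).card = i := by rw [card_sdiff_of_subset hAe, her, hA]; omega
    have hCne : (e \ A).Nonempty := card_pos.1 (by omega)
    set v0 := (e \ A).min' hCne with hv0def
    have hv0C : v0 ∈ e \ A := min'_mem _ _
    refine ⟨(e \ A).erase v0, by rw [card_erase_of_mem hv0C, hCcard], v0, ?_, ?_⟩
    · refine mem_filter.2 ⟨mem_univ _, ⟨⟨(mem_sdiff.1 hv0C).2, ?_⟩, ?_⟩⟩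
      · intro b hb
        obtain ⟨hbne, hbC⟩ := mem_erase.1 hb
        exact lt_of_le_of_ne (min'_le _ _ hbC) (Ne.symm hbne)
      · rw [insert_erase hv0C, union_sdiff_of_subset hAe]
        exact he
    · rw [insert_erase hv0C, union_sdiff_of_subset hAe]
  have hchain : (Dset n r k L A H).card ≤ (n * 2 ^ k) ^ l.length := by
    apply chainCount (n * 2 ^ k) l (Dset n r k L A H) (keyF A H)
    · -- injectivity
      intro G hG G' hG' hagree
      have hdiffsub : ∀ G1 ∈ Dset n r k L A H, ∀ G2 ∈ Dset n r k L A H,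
          (∀ B ∈ l, keyF A H B G1 = keyF A H B G2) →
          (G1 \ H ∪ H \ G1) ⊆ (G2 \ H ∪ H \ G2) := by
        intro G1 h1 G2 h2 hag e he
        obtain ⟨B, hBcard, v, hvk, rfl⟩ := hrec G1 h1 e he
        rw [hag B (hmem B hBcard)] at hvk
        exact (mem_filter.1 hvk).2.2
      have hde : (G \ H ∪ H \ G) = (G' \ H ∪ H \ G') :=
        subset_antisymm (hdiffsub G hG G' hG' hagree)
          (hdiffsub G' hG' G hG (fun B hB => (hagree B hB).symm))
      ext e
      by_cases heH : e ∈ H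
      · have h1 : (e ∈ G \ H ∪ H \ G) ↔ (e ∈ G' \ H ∪ H \ G') := by rw [hde]
        simp only [mem_union, mem_sdiff, heH] at h1
        tauto
      · have h1 : (e ∈ G \ H ∪ H \ G) ↔ (e ∈ G' \ H ∪ H \ G') := by rw [hde]
        simp only [mem_union, mem_sdiff, heH] at h1
        tauto
    · -- conditional bound
      intro l₁ Bc l₂ hdecomp G₀ hG₀
      have hBc : Bc.card = i - 1 :=
        hmem' Bc (by rw [hdecomp]; exact List.mem_append_right _ List.mem_cons_self)
      have hpre : ∀ B'' : Finset (Fin n), B''.card = i - 1 → mu B'' < mu Bc → B'' ∈ l₁ := by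
        intro B'' hc hlt
        have hmemB := hmem B'' hc
        rw [hdecomp] at hmemB
        rcases List.mem_append.1 hmemB with h | h
        · exact h
        · exfalso
          rcases List.mem_cons.1 h with rfl | h2
          · exact lt_irrefl _ hlt
          · have hs := hsorted
            rw [hdecomp] at hs
            have hs2 := (List.pairwise_append.1 hs).2.1
            have h3 := (List.pairwise_cons.1 hs2).1 B'' h2
            simp only [decide_eq_true_eq] at h3
            omega
      have hpc := perCoord hr hn hk hgood hi1 hi2 hA hH Bc hBc l₁ hpre G₀ hG₀
      convert hpc using 4
  have hn0 : 0 < n := by omega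
  calc (Dset n r k L A H).card ≤ (n * 2 ^ k) ^ l.length := hchain
    _ ≤ (n * 2 ^ k) ^ (n ^ (i - 1)) := by
      apply Nat.pow_le_pow_right (by positivity)
      have hlen : l.length = n.choose (i - 1) := by
        rw [hldef, List.length_mergeSort, Finset.length_toList, card_powersetCard,
          card_univ, Fintype.card_fin]
      rw [hlen]
      exact Nat.choose_le_pow n (i - 1)

lemma dmaxBound {n r k i : ℕ} {L : Finset ℕ}
    (hr : 2 ≤ r) (hn : r ≤ n) (hk : r < k) (hgood : ThreeGood k r L)
    (hi1 : 1 ≤ i) (hi2 : i ≤ r - 1) :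
    dmax n r k L (r - i) ≤ (n * 2 ^ k) ^ (n ^ (i - 1)) := by
  apply Finset.sup_le
  rintro ⟨Hp, Ap⟩ hp
  rw [Finset.mem_product] at hp
  have hHp : Hp ⊆ univ.powersetCard r := by
    have h := (mem_filter.1 hp.1).1
    unfold rGraphs at h
    exact mem_powerset.1 h
  have hAp : Ap.card = r - i := (mem_powersetCard.1 hp.2).2
  exact DsetBound hr hn hk hgood hi1 hi2 hAp hHp


/-- Corollary: for `n ≥ r ≥ 2`, `k > r` and a 3-good list `L ⊆ {0,…,C(k,r)}`,
for every `i ∈ {1,…,r-1}` we have `d(r-i, n) ≤ 2^(k·n^(i-1) + n^(i-1)·log₂ n)`. -/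
theorem dmax_bound (n r k : ℕ) (hr : 2 ≤ r) (hn : r ≤ n) (hk : r < k)
    (L : Finset ℕ) (hL : L ⊆ Finset.range (Nat.choose k r + 1))
    (hgood : ThreeGood k r L) :
    ∀ i : ℕ, 1 ≤ i → i ≤ r - 1 →
      (dmax n r k L (r - i) : ℝ) ≤
        (2 : ℝ) ^ ((k : ℝ) * (n : ℝ) ^ (i - 1) + (n : ℝ) ^ (i - 1) * Real.logb 2 n) := by
  intro i hi1 hi2
  have hnat : dmax n r k L (r - i) ≤ (n * 2 ^ k) ^ (n ^ (i - 1)) :=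
    dmaxBound hr hn hk hgood hi1 hi2
  have hn0 : (0:ℝ) < (n:ℝ) := by
    have : 0 < n := by omega
    exact_mod_cast this
  set m : ℕ := n ^ (i - 1) with hmdef
  have hx : ((n:ℝ)) ^ (i - 1) = ((m : ℕ) : ℝ) := by rw [hmdef]; push_cast; ring
  have hrhs : (2 : ℝ) ^ ((k : ℝ) * (n : ℝ) ^ (i - 1) + (n : ℝ) ^ (i - 1) * Real.logb 2 n)
      = (((n * 2 ^ k) ^ m : ℕ) : ℝ) := by
    have hexp : (k : ℝ) * (n : ℝ) ^ (i - 1) + (n : ℝ) ^ (i - 1) * Real.logb 2 n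
        = ((k : ℝ) + Real.logb 2 n) * ((m : ℕ) : ℝ) := by
      rw [hx]; ring
    rw [hexp, Real.rpow_mul (by norm_num : (0:ℝ) ≤ 2), Real.rpow_natCast,
      Real.rpow_add (by norm_num : (0:ℝ) < 2), Real.rpow_natCast,
      Real.rpow_logb (by norm_num) (by norm_num) hn0]
    push_cast
    ring
  rw [hrhs]
  exact_mod_cast hnat
end
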